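/- arXiv:1701.06533 — 9 statements merged into one kernel-verified Lean document; each statement's English description precedes it below -/
import Mathlib

section
/- Let 0 < λN < λN1 be real numbers, let ε > 0 satisfy 1/ε ≥ 3·λN1 + λN, and let θ ∈ ℝ satisfy 2θ(εθ − 1) + λN + λN1 = 0. Then for every real λ with λ ≤ λN or λ ≥ λN1 and every μ ∈ ℝ, the complex number R(μ) := (−εμ² + λ + θ(εθ−1)) + i·(1 − 2εθ)·μ satisfies |R(μ)| ≥ (λN1 − λN)/2. -/
open Complex

/-!
With `s = λN + λN1` and `d = λN1 - λN`, the constraint on `θ` gives `θ(εθ - 1) = -s/2` and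
`(1 - 2εθ)² = 1 - 2εs`, so `R(μ) = (λ - s/2 - εμ²) + i(1 - 2εθ)μ` with `|Im R|² ≥ d·εμ²` by the
gap condition `1/ε ≥ 2s + d`. For `λ ≤ λN` the real part alone is `≤ -d/2`. For `λ ≥ λN1`,
`|R|² ≥ (c - x)² + d x` with `c = λ - s/2 ≥ d/2` and `x = εμ²`, and completing the square
in `x` bounds this below by `d c - d²/4 ≥ d²/4`.
-/

lemma le_norm_ofReal_add_I_mul {r a b : ℝ} (h : r ^ 2 ≤ a ^ 2 + b ^ 2) :
    r ≤ ‖(a : ℂ) + I * b‖ := by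
  rw [mul_comm, norm_add_mul_I]
  exact Real.le_sqrt_of_sq_le h

-- Completing the square: `(c - x)² + d x = (x - (c - d/2))² + d c - d²/4`.
lemma sq_half_le_sub_sq_add_mul {c d x : ℝ} (hd : 0 ≤ d) (hc : d / 2 ≤ c) :
    (d / 2) ^ 2 ≤ (c - x) ^ 2 + d * x := by
  nlinarith [sq_nonneg (x - (c - d / 2))]

section DampedWaveSymbol

variable {lamN lamN1 eps theta : ℝ}

lemma theta_mul_eq_neg_half_sum
    (htheta : 2 * theta * (eps * theta - 1) + lamN + lamN1 = 0) :
    theta * (eps * theta - 1) = -(lamN + lamN1) / 2 := by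
  linarith

lemma gap_mul_le_damping_sq (heps : 0 < eps) (hgap : 1 / eps ≥ 3 * lamN1 + lamN)
    (htheta : 2 * theta * (eps * theta - 1) + lamN + lamN1 = 0) (mu : ℝ) :
    (lamN1 - lamN) * (eps * mu ^ 2) ≤ ((1 - 2 * eps * theta) * mu) ^ 2 := by
  have hdamp : ((1 - 2 * eps * theta) * mu) ^ 2 = (1 - 2 * eps * (lamN + lamN1)) * mu ^ 2 := by
    linear_combination (2 * eps * mu ^ 2) * htheta
  have hgap' : (3 * lamN1 + lamN) * eps ≤ 1 := (le_div_iff₀ heps).mp hgap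
  rw [hdamp]
  nlinarith [mul_le_mul_of_nonneg_right hgap' (sq_nonneg mu)]

end DampedWaveSymbol

theorem stmt_0_general (lamN lamN1 eps theta : ℝ)
    (hlt : lamN < lamN1)
    (heps : 0 < eps) (hgap : 1 / eps ≥ 3 * lamN1 + lamN)
    (htheta : 2 * theta * (eps * theta - 1) + lamN + lamN1 = 0) :
    ∀ lam : ℝ, (lam ≤ lamN ∨ lam ≥ lamN1) → ∀ mu : ℝ,
      ‖(((-eps * mu ^ 2 + lam + theta * (eps * theta - 1)) : ℝ)
          + Complex.I * ((1 - 2 * eps * theta) * mu : ℝ) : ℂ)‖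
        ≥ (lamN1 - lamN) / 2 := by
  intro lam hlam mu
  refine le_norm_ofReal_add_I_mul ?_
  rw [theta_mul_eq_neg_half_sum htheta]
  rcases hlam with hle | hge
  · have hre : -eps * mu ^ 2 + lam + -(lamN + lamN1) / 2 ≤ -((lamN1 - lamN) / 2) := by
      linarith [mul_nonneg heps.le (sq_nonneg mu)]
    nlinarith [sq_nonneg ((1 - 2 * eps * theta) * mu)]
  · calc ((lamN1 - lamN) / 2) ^ 2
        ≤ (lam - (lamN + lamN1) / 2 - eps * mu ^ 2) ^ 2 + (lamN1 - lamN) * (eps * mu ^ 2) :=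
          sq_half_le_sub_sq_add_mul (by linarith) (by linarith)
      _ ≤ (-eps * mu ^ 2 + lam + -(lamN + lamN1) / 2) ^ 2 + ((1 - 2 * eps * theta) * mu) ^ 2 := by
          rw [show -eps * mu ^ 2 + lam + -(lamN + lamN1) / 2
              = lam - (lamN + lamN1) / 2 - eps * mu ^ 2 by ring]
          gcongr
          exact gap_mul_le_damping_sq heps hgap htheta mu

theorem stmt_0 (lamN lamN1 eps theta : ℝ)
    (hlamN : 0 < lamN) (hlt : lamN < lamN1)
    (heps : 0 < eps) (hgap : 1 / eps ≥ 3 * lamN1 + lamN)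
    (htheta : 2 * theta * (eps * theta - 1) + lamN + lamN1 = 0) :
    ∀ lam : ℝ, (lam ≤ lamN ∨ lam ≥ lamN1) → ∀ mu : ℝ,
      ‖(((-eps * mu ^ 2 + lam + theta * (eps * theta - 1)) : ℝ)
          + Complex.I * ((1 - 2 * eps * theta) * mu : ℝ) : ℂ)‖
        ≥ (lamN1 - lamN) / 2 :=
  stmt_0_general lamN lamN1 eps theta hlt heps hgap htheta
end

section
/- Let 0 < λN < λN1 be real numbers, let ε > 0 satisfy 1/ε ≥ 3·λN1 + λN, let θ ∈ ℝ satisfy 2θ(εθ − 1) + λN + λN1 = 0, and let λ ∈ ℝ satisfy 1 − 2ελ + 2εθ(εθ−1) ≥ 0. Then for every μ ∈ ℝ the complex number R(μ) := (−εμ² + λ + θ(εθ−1)) + i·(1−2εθ)·μ satisfies |R(μ)| ≥ |λ − (λN + λN1)/2|, and equality holds at μ = 0. -/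
/-!
The constraint on `θ` turns the real part of `R(μ)` into `d - εμ²` with `d = λ - (λN + λN1)/2`,
so `|R(μ)|² = d² + (c² - 2εd) μ² + ε² μ⁴` where `c = 1 - 2εθ` is the damping coefficient.
The hypothesis on `λ` is exactly `c² - 2εd ≥ 0`, hence `|R(μ)|² ≥ d²`, with equality at `μ = 0`.
-/

open Complex

lemma abs_le_norm_sub_mul_sq_add_I_mul {d eps c : ℝ} (hdamp : 2 * eps * d ≤ c ^ 2) (mu : ℝ) :
    |d| ≤ ‖((d - eps * mu ^ 2 : ℝ) : ℂ) + I * ((c * mu : ℝ) : ℂ)‖ := by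
  rw [mul_comm I, norm_add_mul_I]
  refine Real.abs_le_sqrt ?_
  have hexpand : (d - eps * mu ^ 2) ^ 2 + (c * mu) ^ 2
      = d ^ 2 + (c ^ 2 - 2 * eps * d) * mu ^ 2 + (eps * mu ^ 2) ^ 2 := by ring
  rw [hexpand]
  linarith [mul_nonneg (sub_nonneg.mpr hdamp) (sq_nonneg mu), sq_nonneg (eps * mu ^ 2)]

theorem stmt_2_general (lamN lamN1 eps theta lam : ℝ)
    (htheta : 2 * theta * (eps * theta - 1) + lamN + lamN1 = 0)
    (hcase : 1 - 2 * eps * lam + 2 * eps * theta * (eps * theta - 1) ≥ 0) :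
    (∀ mu : ℝ,
      ‖(((-eps * mu ^ 2 + lam + theta * (eps * theta - 1)) : ℝ)
          + Complex.I * ((1 - 2 * eps * theta) * mu : ℝ))‖
        ≥ |lam - (lamN + lamN1) / 2|) ∧
    ‖(((-eps * (0:ℝ) ^ 2 + lam + theta * (eps * theta - 1)) : ℝ)
        + Complex.I * ((1 - 2 * eps * theta) * (0:ℝ) : ℝ))‖
      = |lam - (lamN + lamN1) / 2| := by
  set d := lam - (lamN + lamN1) / 2
  have hreal (mu : ℝ) : -eps * mu ^ 2 + lam + theta * (eps * theta - 1) = d - eps * mu ^ 2 := by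
    linear_combination htheta / 2
  have hdamp : 2 * eps * d ≤ (1 - 2 * eps * theta) ^ 2 := by
    linear_combination hcase - eps * htheta
  refine ⟨fun mu => ?_, ?_⟩
  · rw [hreal]
    exact abs_le_norm_sub_mul_sq_add_I_mul hdamp mu
  · rw [hreal]
    simp

theorem stmt_2 (lamN lamN1 eps theta lam : ℝ)
    (hlamN : 0 < lamN) (hlt : lamN < lamN1)
    (heps : 0 < eps) (hgap : 1 / eps ≥ 3 * lamN1 + lamN)
    (htheta : 2 * theta * (eps * theta - 1) + lamN + lamN1 = 0)
    (hcase : 1 - 2 * eps * lam + 2 * eps * theta * (eps * theta - 1) ≥ 0) :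
    (∀ mu : ℝ,
      ‖(((-eps * mu ^ 2 + lam + theta * (eps * theta - 1)) : ℝ)
          + Complex.I * ((1 - 2 * eps * theta) * mu : ℝ))‖
        ≥ |lam - (lamN + lamN1) / 2|) ∧
    ‖(((-eps * (0:ℝ) ^ 2 + lam + theta * (eps * theta - 1)) : ℝ)
        + Complex.I * ((1 - 2 * eps * theta) * (0:ℝ) : ℝ))‖
      = |lam - (lamN + lamN1) / 2| :=
  stmt_2_general lamN lamN1 eps theta lam htheta hcase
end

section
/- Let 0 < λN < λN1 be real numbers, let ε > 0 satisfy 1/ε ≥ 3·λN1 + λN, let θ ∈ ℝ satisfy 2θ(εθ − 1) + λN + λN1 = 0, and let λ ∈ ℝ satisfy 1 − 2ελ + 2εθ(εθ−1) < 0. Then for every μ ∈ ℝ the complex number R(μ) := (−εμ² + λ + θ(εθ−1)) + i·(1−2εθ)·μ satisfies |R(μ)|² ≥ (1/(2ε) + 2θ(εθ−1))·(2λ − 1/(2ε)), and moreover (1/(2ε) + 2θ(εθ−1))·(2λ − 1/(2ε)) = (1/(2ε) − λN − λN1)·(2λ − 1/(2ε)) ≥ (1/(2ε) − λN − λN1)²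 ≥ ((λN1 − λN)/2)². -/
open Complex

theorem stmt_3 (lamN lamN1 eps theta lam : ℝ)
    (hlamN : 0 < lamN) (hlt : lamN < lamN1)
    (heps : 0 < eps) (hgap : 1 / eps ≥ 3 * lamN1 + lamN)
    (htheta : 2 * theta * (eps * theta - 1) + lamN + lamN1 = 0)
    (hcase : 1 - 2 * eps * lam + 2 * eps * theta * (eps * theta - 1) < 0) :
    (∀ mu : ℝ,
      (‖(((-eps * mu ^ 2 + lam + theta * (eps * theta - 1)) : ℝ)
          + Complex.I * ((1 - 2 * eps * theta) * mu : ℝ) : ℂ)‖) ^ 2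
        ≥ (1 / (2 * eps) + 2 * theta * (eps * theta - 1)) * (2 * lam - 1 / (2 * eps))) ∧
    (1 / (2 * eps) + 2 * theta * (eps * theta - 1)) * (2 * lam - 1 / (2 * eps))
      = (1 / (2 * eps) - lamN - lamN1) * (2 * lam - 1 / (2 * eps)) ∧
    (1 / (2 * eps) - lamN - lamN1) * (2 * lam - 1 / (2 * eps))
      ≥ (1 / (2 * eps) - lamN - lamN1) ^ 2 ∧
    (1 / (2 * eps) - lamN - lamN1) ^ 2 ≥ ((lamN1 - lamN) / 2) ^ 2 := by
  have hA : theta * (eps * theta - 1) = -(lamN + lamN1) / 2 := by linarith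
  have hepsne : eps ≠ 0 := ne_of_gt heps
  have hhalf : 1 / (2 * eps) = (1 / eps) / 2 := by ring
  have hD : 1 / (2 * eps) - lamN - lamN1 ≥ (lamN1 - lamN) / 2 := by
    rw [hhalf]; linarith
  have hDpos : 0 < 1 / (2 * eps) - lamN - lamN1 := by linarith
  have hinv : 1 / eps * eps = 1 := by field_simp
  have hlam2 : 2 * lam - 1 / (2 * eps) ≥ 1 / (2 * eps) - lamN - lamN1 := by
    rw [hhalf]
    have h1 : 1 - 2 * eps * lam - eps * (lamN + lamN1) < 0 := by nlinarith [hcase, hA]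
    nlinarith [h1, hinv, heps]
  refine ⟨?_, by linear_combination (2 * lam - 1 / (2 * eps)) * htheta, ?_, ?_⟩
  · intro mu
    have h : (‖(((-eps * mu ^ 2 + lam + theta * (eps * theta - 1)) : ℝ)
          + Complex.I * ((1 - 2 * eps * theta) * mu : ℝ) : ℂ)‖) ^ 2
        = (-eps * mu ^ 2 + lam + theta * (eps * theta - 1)) ^ 2
          + ((1 - 2 * eps * theta) * mu) ^ 2 := by
      rw [Complex.sq_norm, Complex.normSq_apply]
      simp only [Complex.add_re, Complex.add_im, Complex.mul_re, Complex.mul_im,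
        Complex.I_re, Complex.I_im, Complex.ofReal_re, Complex.ofReal_im]
      ring
    rw [h]
    have key : 4 * eps ^ 2 * ((-eps * mu ^ 2 + lam + theta * (eps * theta - 1)) ^ 2
          + ((1 - 2 * eps * theta) * mu) ^ 2)
        - 4 * eps ^ 2 * ((1 / (2 * eps) + 2 * theta * (eps * theta - 1)) * (2 * lam - 1 / (2 * eps)))
        = (2 * eps ^ 2 * mu ^ 2 + 1 + 2 * eps * (theta * (eps * theta - 1)) - 2 * eps * lam) ^ 2 := by
      field_simp
      ring
    have h4 : (0:ℝ) < 4 * eps ^ 2 := by positivity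
    have h5 : 0 ≤ 4 * eps ^ 2 * (((-eps * mu ^ 2 + lam + theta * (eps * theta - 1)) ^ 2
          + ((1 - 2 * eps * theta) * mu) ^ 2)
        - ((1 / (2 * eps) + 2 * theta * (eps * theta - 1)) * (2 * lam - 1 / (2 * eps)))) := by
      rw [mul_sub]
      nlinarith [key, sq_nonneg (2 * eps ^ 2 * mu ^ 2 + 1 + 2 * eps * (theta * (eps * theta - 1)) - 2 * eps * lam)]
    have h6 := (mul_nonneg_iff_of_pos_left h4).mp h5
    linarith
  · nlinarith [hlam2, hDpos]
  · nlinarith [hD, hlt]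
end

section
/- Let 0 < λN < λN1 be real numbers, let ε > 0 satisfy 1/ε ≥ 3·λN1 + λN, let θ ∈ ℝ satisfy 2θ(εθ − 1) + λN + λN1 = 0, and let λ ∈ ℝ satisfy λ ≤ λN or λ ≥ λN1. Suppose v : ℝ → ℝ is twice continuously differentiable, and v, v′, v″ all belong to L²(ℝ). Set g(t) := ε·v″(t) + (1 − 2εθ)·v′(t) + (λ + θ(εθ−1))·v(t). Then ‖v‖_{L²(ℝ)} ≤ (2/(λN1 − λN))·‖g‖_{L²(ℝ)}. -/
/-!
Energy method. With `b = 1 - 2εθ` and `c = λ + θ(εθ - 1)`, integrating by parts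
(`∫ v v' = ∫ v' v'' = 0`, `∫ v v'' = -‖v'‖²`) gives
`‖g‖² = ε²‖v''‖² + (b² - 2εc)‖v'‖² + c²‖v‖²`, the physical-space form of
`∫ |R(μ)|² |v̂(μ)|² dμ`. The relation defining `θ` turns this into
`‖g‖² = ((λN1 - λN)/2)² ‖v‖² + ε²‖v''‖² + β‖v'‖² + (λ - λN)(λ - λN1)‖v‖²`
with `β = 1 - ε(λN + λN1 + 2λ)`, and the last three terms form a nonnegative
quadratic form because `‖v'‖² ≤ ‖v‖ ‖v''‖` (integration by parts and Cauchy–Schwarz) and the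
condition on `ε` makes `β ≥ -2ε √((λ - λN)(λ - λN1))`.
-/

open MeasureTheory

section
variable {α : Type*} [MeasurableSpace α] {μ : Measure α} {f g : α → ℝ}

theorem integrable_mul_of_integrable_sq (hf : AEStronglyMeasurable f μ)
    (hg : AEStronglyMeasurable g μ) (hf2 : Integrable (fun x => f x ^ 2) μ)
    (hg2 : Integrable (fun x => g x ^ 2) μ) : Integrable (fun x => f x * g x) μ :=
  ((memLp_two_iff_integrable_sq hf).2 hf2).integrable_mul ((memLp_two_iff_integrable_sq hg).2 hg2)

theorem sq_integral_mul_le (hf2 : Integrable (fun x => f x ^ 2) μ)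
    (hg2 : Integrable (fun x => g x ^ 2) μ) (hfg : Integrable (fun x => f x * g x) μ) :
    (∫ x, f x * g x ∂μ) ^ 2 ≤ (∫ x, f x ^ 2 ∂μ) * ∫ x, g x ^ 2 ∂μ := by
  have hquad : ∀ s : ℝ, 0 ≤ (∫ x, g x ^ 2 ∂μ) * (s * s) + 2 * (∫ x, f x * g x ∂μ) * s
      + ∫ x, f x ^ 2 ∂μ := by
    intro s
    have h : 0 ≤ ∫ x, (f x + s * g x) ^ 2 ∂μ := integral_nonneg fun x => sq_nonneg _
    have e : ∀ x, (f x + s * g x) ^ 2 = f x ^ 2 + 2 * s * (f x * g x) + s ^ 2 * g x ^ 2 :=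
      fun x => by ring
    simp only [e] at h
    simp (disch := fun_prop) only [integral_add, integral_const_mul] at h
    linarith
  have := discrim_le_zero hquad
  rw [discrim] at this
  linarith

end

section
variable {u w : ℝ → ℝ}

theorem integral_mul_deriv_eq_neg_of_integrable_sq (hu : Differentiable ℝ u)
    (hw : Differentiable ℝ w) (hu2 : Integrable fun x => u x ^ 2)
    (hw2 : Integrable fun x => w x ^ 2) (hu'2 : Integrable fun x => deriv u x ^ 2)
    (hw'2 : Integrable fun x => deriv w x ^ 2) :
    ∫ x, u x * deriv w x = -∫ x, deriv u x * w x :=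
  have hu_meas := hu.continuous.aestronglyMeasurable
  have hw_meas := hw.continuous.aestronglyMeasurable
  integral_mul_deriv_eq_deriv_mul_of_integrable (fun x _ => (hu x).hasDerivAt)
    (fun x _ => (hw x).hasDerivAt)
    (integrable_mul_of_integrable_sq hu_meas (measurable_deriv w).aestronglyMeasurable hu2 hw'2)
    (integrable_mul_of_integrable_sq (measurable_deriv u).aestronglyMeasurable hw_meas hu'2 hw2)
    (integrable_mul_of_integrable_sq hu_meas hw_meas hu2 hw2)

theorem integral_mul_deriv_self_eq_zero (hu : Differentiable ℝ u)
    (hu2 : Integrable fun x => u x ^ 2) (hu'2 : Integrable fun x => deriv u x ^ 2) :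
    ∫ x, u x * deriv u x = 0 := by
  have h := integral_mul_deriv_eq_neg_of_integrable_sq hu hu hu2 hu2 hu'2 hu'2
  simp only [mul_comm (deriv u _)] at h
  linarith

end

section
variable {v : ℝ → ℝ}

theorem ContDiff.differentiable_deriv_of_two (hv : ContDiff ℝ 2 v) : Differentiable ℝ (deriv v) :=
  ((contDiff_succ_iff_deriv (n := 1)).mp hv).2.2.differentiable one_ne_zero

theorem integral_sq_second_order_eq (a b c : ℝ) (hv : ContDiff ℝ 2 v)
    (hv2 : Integrable fun t => v t ^ 2) (hv'2 : Integrable fun t => deriv v t ^ 2)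
    (hv''2 : Integrable fun t => deriv (deriv v) t ^ 2) :
    ∫ t, (a * deriv (deriv v) t + b * deriv v t + c * v t) ^ 2
      = a ^ 2 * (∫ t, deriv (deriv v) t ^ 2) + (b ^ 2 - 2 * a * c) * (∫ t, deriv v t ^ 2)
        + c ^ 2 * ∫ t, v t ^ 2 := by
  have hd := hv.differentiable two_ne_zero
  have hd' := hv.differentiable_deriv_of_two
  have m0 := hd.continuous.aestronglyMeasurable (μ := volume)
  have m1 := (measurable_deriv v).aestronglyMeasurable (μ := volume)
  have m2 := (measurable_deriv (deriv v)).aestronglyMeasurable (μ := volume)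
  have i01 := integrable_mul_of_integrable_sq m0 m1 hv2 hv'2
  have i02 := integrable_mul_of_integrable_sq m0 m2 hv2 hv''2
  have i12 := integrable_mul_of_integrable_sq m1 m2 hv'2 hv''2
  have h01 := integral_mul_deriv_self_eq_zero hd hv2 hv'2
  have h12 := integral_mul_deriv_self_eq_zero hd' hv'2 hv''2
  have h02 := integral_mul_deriv_eq_neg_of_integrable_sq hd hd' hv2 hv'2 hv'2 hv''2
  simp only [← sq] at h02
  have e : ∀ t, (a * deriv (deriv v) t + b * deriv v t + c * v t) ^ 2
      = a ^ 2 * deriv (deriv v) t ^ 2 + b ^ 2 * deriv v t ^ 2 + c ^ 2 * v t ^ 2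
        + 2 * a * b * (deriv v t * deriv (deriv v) t) + 2 * a * c * (v t * deriv (deriv v) t)
        + 2 * b * c * (v t * deriv v t) := fun t => by ring
  simp only [e]
  simp (disch := fun_prop) only [integral_add, integral_const_mul]
  rw [h01, h12, h02]
  ring

theorem sq_integral_deriv_sq_le (hv : ContDiff ℝ 2 v)
    (hv2 : Integrable fun t => v t ^ 2) (hv'2 : Integrable fun t => deriv v t ^ 2)
    (hv''2 : Integrable fun t => deriv (deriv v) t ^ 2) :
    (∫ t, deriv v t ^ 2) ^ 2 ≤ (∫ t, v t ^ 2) * ∫ t, deriv (deriv v) t ^ 2 := by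
  have hd := hv.differentiable two_ne_zero
  have h02 := integral_mul_deriv_eq_neg_of_integrable_sq hd hv.differentiable_deriv_of_two
    hv2 hv'2 hv'2 hv''2
  simp only [← sq] at h02
  have hCS := sq_integral_mul_le hv2 hv''2 (integrable_mul_of_integrable_sq
    hd.continuous.aestronglyMeasurable (measurable_deriv _).aestronglyMeasurable hv2 hv''2)
  rwa [h02, neg_sq] at hCS

end

theorem quadratic_form_nonneg_of_sq_le_mul {p q r X Y Z : ℝ} (hp : 0 ≤ p) (hr : 0 ≤ r)
    (hX : 0 ≤ X) (hY : 0 ≤ Y) (hZ : 0 ≤ Z) (hYXZ : Y ^ 2 ≤ X * Z)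
    (hq : 0 ≤ q ∨ q ^ 2 ≤ 4 * p * r) : 0 ≤ p * Z + q * Y + r * X := by
  rcases hq with hq | hq
  · positivity
  · have hS : 0 ≤ p * Z + r * X := by positivity
    have : (q * Y) ^ 2 ≤ (p * Z + r * X) ^ 2 := by
      calc (q * Y) ^ 2 = q ^ 2 * Y ^ 2 := by ring
        _ ≤ 4 * p * r * (X * Z) := mul_le_mul hq hYXZ (sq_nonneg _) (by positivity)
        _ ≤ (p * Z + r * X) ^ 2 := by nlinarith [sq_nonneg (p * Z - r * X)]
    linarith [(abs_le_of_sq_le_sq' this hS).1]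

theorem nonneg_or_sq_le_of_spectral_gap {lamN lamN1 eps lam : ℝ} (hlt : lamN < lamN1)
    (heps : 0 < eps) (hgap : eps * (3 * lamN1 + lamN) ≤ 1) (hlam : lam ≤ lamN ∨ lam ≥ lamN1) :
    0 ≤ 1 - eps * (lamN + lamN1 + 2 * lam)
      ∨ (1 - eps * (lamN + lamN1 + 2 * lam)) ^ 2 ≤ 4 * eps ^ 2 * ((lam - lamN) * (lam - lamN1)) := by
  rcases hlam with h | h
  · left
    nlinarith
  · by_cases hβ : 0 ≤ 1 - eps * (lamN + lamN1 + 2 * lam)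
    · exact Or.inl hβ
    right
    -- with a = 1 - 2ε(λN + λN1), d = ε(λN1 - λN), u = ε(2λ - λN - λN1) the claim reads
    -- a² + d² ≤ 2au, and the gap condition gives 0 ≤ d ≤ a < u
    set a := 1 - 2 * eps * (lamN + lamN1)
    set d := eps * (lamN1 - lamN)
    set u := eps * (2 * lam - lamN - lamN1)
    have hd : 0 ≤ d := by positivity
    have hda : d ≤ a := by linarith
    have hau : a < u := by linarith
    have key : a ^ 2 + d ^ 2 ≤ 2 * a * u := by nlinarith [mul_le_mul hda hda hd (hd.trans hda)]
    linear_combination key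

theorem coeffs_of_theta_relation {lamN lamN1 eps theta lam : ℝ}
    (htheta : 2 * theta * (eps * theta - 1) + lamN + lamN1 = 0) :
    (1 - 2 * eps * theta) ^ 2 - 2 * eps * (lam + theta * (eps * theta - 1))
        = 1 - eps * (lamN + lamN1 + 2 * lam)
      ∧ (lam + theta * (eps * theta - 1)) ^ 2
        = ((lamN1 - lamN) / 2) ^ 2 + (lam - lamN) * (lam - lamN1) :=
  ⟨by linear_combination eps * htheta,
    by linear_combination (2 * lam + theta * (eps * theta - 1) - (lamN + lamN1) / 2) / 2 * htheta⟩

theorem stmt_4_general (lamN lamN1 eps theta lam : ℝ)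
    (hlt : lamN < lamN1)
    (heps : 0 < eps) (hgap : 1 / eps ≥ 3 * lamN1 + lamN)
    (htheta : 2 * theta * (eps * theta - 1) + lamN + lamN1 = 0)
    (hlam : lam ≤ lamN ∨ lam ≥ lamN1)
    (v : ℝ → ℝ) (hv : ContDiff ℝ 2 v)
    (hv2 : Integrable (fun t => (v t) ^ 2))
    (hv'2 : Integrable (fun t => (deriv v t) ^ 2))
    (hv''2 : Integrable (fun t => (deriv (deriv v) t) ^ 2)) :
    Real.sqrt (∫ t : ℝ, (v t) ^ 2)
      ≤ (2 / (lamN1 - lamN)) *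
        Real.sqrt (∫ t : ℝ,
          (eps * deriv (deriv v) t + (1 - 2 * eps * theta) * deriv v t
            + (lam + theta * (eps * theta - 1)) * v t) ^ 2) := by
  have hgap' : eps * (3 * lamN1 + lamN) ≤ 1 := by
    rwa [ge_iff_le, le_div_iff₀ heps, mul_comm] at hgap
  have hr : 0 ≤ (lam - lamN) * (lam - lamN1) := by rcases hlam with h | h <;> nlinarith
  have hform := quadratic_form_nonneg_of_sq_le_mul (sq_nonneg eps) hr
    (integral_nonneg fun t => sq_nonneg (v t)) (integral_nonneg fun t => sq_nonneg (deriv v t))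
    (integral_nonneg fun t => sq_nonneg (deriv (deriv v) t))
    (sq_integral_deriv_sq_le hv hv2 hv'2 hv''2)
    (nonneg_or_sq_le_of_spectral_gap hlt heps hgap' hlam)
  obtain ⟨hβ, hc⟩ := coeffs_of_theta_relation (lam := lam) htheta
  have hlower : ((lamN1 - lamN) / 2) ^ 2 * ∫ t, v t ^ 2 ≤ ∫ t,
      (eps * deriv (deriv v) t + (1 - 2 * eps * theta) * deriv v t
        + (lam + theta * (eps * theta - 1)) * v t) ^ 2 := by
    rw [integral_sq_second_order_eq _ _ _ hv hv2 hv'2 hv''2, hβ, hc]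
    linarith
  have hd : 0 < lamN1 - lamN := sub_pos.2 hlt
  calc Real.sqrt (∫ t, v t ^ 2)
      = (2 / (lamN1 - lamN)) * Real.sqrt (((lamN1 - lamN) / 2) ^ 2 * ∫ t, v t ^ 2) := by
        rw [Real.sqrt_mul (sq_nonneg _), Real.sqrt_sq (by positivity)]
        field_simp
    _ ≤ _ := by gcongr

theorem stmt_4 (lamN lamN1 eps theta lam : ℝ)
    (hlamN : 0 < lamN) (hlt : lamN < lamN1)
    (heps : 0 < eps) (hgap : 1 / eps ≥ 3 * lamN1 + lamN)
    (htheta : 2 * theta * (eps * theta - 1) + lamN + lamN1 = 0)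
    (hlam : lam ≤ lamN ∨ lam ≥ lamN1)
    (v : ℝ → ℝ) (hv : ContDiff ℝ 2 v)
    (hv2 : Integrable (fun t => (v t) ^ 2))
    (hv'2 : Integrable (fun t => (deriv v t) ^ 2))
    (hv''2 : Integrable (fun t => (deriv (deriv v) t) ^ 2)) :
    Real.sqrt (∫ t : ℝ, (v t) ^ 2)
      ≤ (2 / (lamN1 - lamN)) *
        Real.sqrt (∫ t : ℝ,
          (eps * deriv (deriv v) t + (1 - 2 * eps * theta) * deriv v t
            + (lam + theta * (eps * theta - 1)) * v t) ^ 2) :=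
  stmt_4_general lamN lamN1 eps theta lam hlt heps hgap htheta hlam v hv hv2 hv'2 hv''2
end

section
/- Let λ : ℕ → ℝ be a nondecreasing sequence with λ₀ > 0, let N ∈ ℕ satisfy λ_{N+1} > λ_N, let ε > 0 satisfy 1/ε ≥ 3·λ_{N+1} + λ_N, and let θ ∈ ℝ satisfy 2θ(εθ − 1) + λ_N + λ_{N+1} = 0. Let u, h : ℝ → ℓ²(ℕ,ℝ) be such that t ↦ e^{θt}·u(t) and t ↦ e^{θt}·h(t) belong to L²(ℝ; ℓ²), for each n ∈ ℕ the component u_n(t) := (u(t))_n is twice continuously differentiable with t ↦ e^{θt}u_n′(t) and t ↦ e^{θt}u_n″(t) in L²(ℝ), and for each n and all t ∈ ℝ, ε·u_n″(t) + u_n′(t) + λ_n·u_n(t) = (h(t))_n. Then (∫_ℝ e^{2θt}‖u(t)‖²_{ℓ²} dt)^{1/2} ≤ (2/(λ_{N+1} − λ_N))·(∫_ℝ e^{2θt}‖h(t)‖²_{ℓ²} dt)^{1/2}. -/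
open MeasureTheory

/-!
In each coordinate the substitution `v = e^{θt} u_n` turns the equation into
`ε v'' + b v' + a_n v = e^{θt} h_n` with `b = 1 - 2εθ` and `a_n = λ_n - (λ_N + λ_{N+1})/2`:
the choice of `θ` centres the spectrum at the middle of the gap, so `|a_n| ≥ κ := (λ_{N+1} - λ_N)/2`.
Integrating by parts, `‖ε v'' + b v' + a v‖² = ε²‖v''‖² + (b² - 2εa)‖v'‖² + a²‖v‖²`. When
`b² - 2εa < 0` the middle term is controlled by `2c‖v'‖² ≤ c²‖v‖² + ‖v''‖²` (from
`‖v'‖² = -⟪v, v''⟫`), and the smallness of `ε` (`b² ≥ 2εκ`) makes the remainder at least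
`κ²‖v‖²`. Summing these coordinate estimates (Parseval in `ℓ²`) gives the claim.
-/

section SecondOrderL2

variable {v v' v'' : ℝ → ℝ}

theorem integral_mul_deriv_eq_zero (hv : ∀ t, HasDerivAt v (v' t) t)
    (h0 : MemLp v 2) (h1 : MemLp v' 2) : ∫ t, v t * v' t = 0 := by
  refine integral_eq_zero_of_hasDerivAt_of_integrable (f := fun t => v t ^ 2 / 2)
    (fun t => ?_) (h0.integrable_mul h1) (h0.integrable_sq.div_const 2)
  exact (((hv t).fun_pow 2).div_const 2).congr_deriv (by norm_num; ring)

theorem integral_mul_second_deriv (hv : ∀ t, HasDerivAt v (v' t) t)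
    (hv' : ∀ t, HasDerivAt v' (v'' t) t) (h0 : MemLp v 2) (h1 : MemLp v' 2) (h2 : MemLp v'' 2) :
    ∫ t, v t * v'' t = -∫ t, v' t ^ 2 := by
  have hder : ∀ t, HasDerivAt (fun s => v s * v' s) (v' t ^ 2 + v t * v'' t) t := fun t =>
    ((hv t).fun_mul (hv' t)).congr_deriv (by ring)
  have h := integral_eq_zero_of_hasDerivAt_of_integrable hder
    (h1.integrable_sq.add (h0.integrable_mul h2)) (h0.integrable_mul h1)
  rw [integral_add h1.integrable_sq (h0.integrable_mul h2 : Integrable (fun t => v t * v'' t))] at h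
  linarith

theorem integral_sq_damped_combination (ε b a : ℝ) (hv : ∀ t, HasDerivAt v (v' t) t)
    (hv' : ∀ t, HasDerivAt v' (v'' t) t) (h0 : MemLp v 2) (h1 : MemLp v' 2) (h2 : MemLp v'' 2) :
    ∫ t, (ε * v'' t + b * v' t + a * v t) ^ 2
      = ε ^ 2 * (∫ t, v'' t ^ 2) + (b ^ 2 - 2 * ε * a) * (∫ t, v' t ^ 2)
        + a ^ 2 * ∫ t, v t ^ 2 := by
  have i0 : Integrable (fun t => v t ^ 2) := h0.integrable_sq
  have i1 : Integrable (fun t => v' t ^ 2) := h1.integrable_sq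
  have i2 : Integrable (fun t => v'' t ^ 2) := h2.integrable_sq
  have i01 : Integrable (fun t => v t * v' t) := h0.integrable_mul h1
  have i02 : Integrable (fun t => v t * v'' t) := h0.integrable_mul h2
  have i12 : Integrable (fun t => v' t * v'' t) := h1.integrable_mul h2
  have hexpand : (fun t => (ε * v'' t + b * v' t + a * v t) ^ 2) = fun t =>
      ε ^ 2 * v'' t ^ 2 + b ^ 2 * v' t ^ 2 + a ^ 2 * v t ^ 2 + 2 * ε * b * (v' t * v'' t)
        + 2 * ε * a * (v t * v'' t) + 2 * a * b * (v t * v' t) := by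
    funext t; ring
  rw [hexpand, integral_add (by fun_prop) (by fun_prop), integral_add (by fun_prop) (by fun_prop),
    integral_add (by fun_prop) (by fun_prop), integral_add (by fun_prop) (by fun_prop),
    integral_add (by fun_prop) (by fun_prop)]
  simp only [integral_const_mul]
  rw [integral_mul_deriv_eq_zero hv h0 h1, integral_mul_deriv_eq_zero hv' h1 h2,
    integral_mul_second_deriv hv hv' h0 h1 h2]
  ring

theorem two_mul_integral_deriv_sq_le (c : ℝ) (hv : ∀ t, HasDerivAt v (v' t) t)
    (hv' : ∀ t, HasDerivAt v' (v'' t) t) (h0 : MemLp v 2) (h1 : MemLp v' 2) (h2 : MemLp v'' 2) :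
    2 * c * ∫ t, v' t ^ 2 ≤ c ^ 2 * (∫ t, v t ^ 2) + ∫ t, v'' t ^ 2 := by
  have i0 : Integrable (fun t => v t ^ 2) := h0.integrable_sq
  have i2 : Integrable (fun t => v'' t ^ 2) := h2.integrable_sq
  have i02 : Integrable (fun t => v t * v'' t) := h0.integrable_mul h2
  calc 2 * c * ∫ t, v' t ^ 2 = ∫ t, -(2 * c) * (v t * v'' t) := by
        rw [integral_const_mul, integral_mul_second_deriv hv hv' h0 h1 h2]; ring
    _ ≤ ∫ t, (c ^ 2 * v t ^ 2 + v'' t ^ 2) :=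
        integral_mono (by fun_prop) (by fun_prop) fun t => by
          nlinarith [sq_nonneg (c * v t + v'' t)]
    _ = c ^ 2 * (∫ t, v t ^ 2) + ∫ t, v'' t ^ 2 := by
        rw [integral_add (by fun_prop) i2, integral_const_mul]

end SecondOrderL2

theorem sq_mul_le_damped_quadratic_form {ε a b κ J₀ J₁ J₂ : ℝ} (hε : 0 < ε) (hκ : 0 ≤ κ)
    (ha : κ ≤ |a|) (hb : 2 * ε * κ ≤ b ^ 2) (hJ₀ : 0 ≤ J₀) (hJ₁ : 0 ≤ J₁) (hJ₂ : 0 ≤ J₂)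
    (hJ : ∀ c, 2 * c * J₁ ≤ c ^ 2 * J₀ + J₂) :
    κ ^ 2 * J₀ ≤ ε ^ 2 * J₂ + (b ^ 2 - 2 * ε * a) * J₁ + a ^ 2 * J₀ := by
  have hκa : κ ^ 2 ≤ a ^ 2 := by
    rw [← sq_abs a]; exact pow_le_pow_left₀ hκ ha 2
  rcases le_or_gt (2 * ε * a) (b ^ 2) with hab | hab
  · nlinarith [mul_nonneg (sub_nonneg.2 hab) hJ₁, mul_nonneg (sq_nonneg ε) hJ₂,
      mul_le_mul_of_nonneg_right hκa hJ₀]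
  · -- the negative `J₁` term is absorbed by `hJ` at `c = p / (2 ε²)`, leaving `a² - d²`
    set p := 2 * ε * a - b ^ 2
    set d := p / (2 * ε)
    have hp : p * J₁ ≤ d ^ 2 * J₀ + ε ^ 2 * J₂ := by
      have h := mul_le_mul_of_nonneg_left (hJ (p / (2 * ε ^ 2))) (sq_nonneg ε)
      have e₁ : ε ^ 2 * (2 * (p / (2 * ε ^ 2)) * J₁) = p * J₁ := by field_simp
      have e₂ : ε ^ 2 * ((p / (2 * ε ^ 2)) ^ 2 * J₀ + J₂) = d ^ 2 * J₀ + ε ^ 2 * J₂ := by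
        simp only [d]; field_simp
      linarith
    have hd : κ ^ 2 ≤ a ^ 2 - d ^ 2 := by
      have e : (a ^ 2 - d ^ 2) * (4 * ε ^ 2) = b ^ 2 * (4 * ε * a - b ^ 2) := by
        simp only [d, p]; field_simp; ring
      have h : (2 * ε * κ) * (2 * ε * κ) ≤ b ^ 2 * (4 * ε * a - b ^ 2) :=
        mul_le_mul hb (by linarith) (by positivity) (sq_nonneg b)
      nlinarith [mul_pos hε hε]
    nlinarith [mul_le_mul_of_nonneg_right hd hJ₀]

theorem hasDerivAt_exp_const_mul (θ t : ℝ) :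
    HasDerivAt (fun s => Real.exp (θ * s)) (θ * Real.exp (θ * t)) t :=
  (((hasDerivAt_id t).const_mul θ).exp).congr_deriv (by simp [mul_comm])

/-- The substitution `v = e^{θ t} f` turns `ε f'' + f' + l f` into
`e^{-θ t} (ε v'' + (1 - 2εθ) v' + (l + εθ² - θ) v)`. -/
theorem weighted_damped_estimate {ε θ l κ : ℝ} {f w : ℝ → ℝ} (hε : 0 < ε) (hκ : 0 ≤ κ)
    (ha : κ ≤ |l + ε * θ ^ 2 - θ|) (hb : 2 * ε * κ ≤ (1 - 2 * ε * θ) ^ 2) (hf : ContDiff ℝ 2 f)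
    (h₀ : MemLp (fun t => Real.exp (θ * t) * f t) 2)
    (h₁ : MemLp (fun t => Real.exp (θ * t) * deriv f t) 2)
    (h₂ : MemLp (fun t => Real.exp (θ * t) * deriv (deriv f) t) 2)
    (hode : ∀ t, ε * deriv (deriv f) t + deriv f t + l * f t = w t) :
    κ ^ 2 * ∫ t, (Real.exp (θ * t) * f t) ^ 2 ≤ ∫ t, (Real.exp (θ * t) * w t) ^ 2 := by
  have hf' : ∀ t, HasDerivAt f (deriv f t) t := fun t =>
    (hf.differentiable two_ne_zero t).hasDerivAt
  have hf'' : ∀ t, HasDerivAt (deriv f) (deriv (deriv f) t) t := fun t =>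
    ((ContDiff.deriv' (n := 1) hf).differentiable one_ne_zero t).hasDerivAt
  set E := fun t => Real.exp (θ * t)
  set v := fun t => E t * f t
  set v' := fun t => θ * (E t * f t) + E t * deriv f t
  set v'' := fun t => θ ^ 2 * (E t * f t) + 2 * θ * (E t * deriv f t) + E t * deriv (deriv f) t
  have hv : ∀ t, HasDerivAt v (v' t) t := fun t =>
    ((hasDerivAt_exp_const_mul θ t).fun_mul (hf' t)).congr_deriv (by ring)
  have hv' : ∀ t, HasDerivAt v' (v'' t) t := fun t =>
    ((((hasDerivAt_exp_const_mul θ t).fun_mul (hf' t)).const_mul θ).add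
      ((hasDerivAt_exp_const_mul θ t).fun_mul (hf'' t))).congr_deriv (by ring)
  have h₁' : MemLp v' 2 := (h₀.const_mul θ).add h₁
  have h₂' : MemLp v'' 2 := ((h₀.const_mul (θ ^ 2)).add (h₁.const_mul (2 * θ))).add h₂
  have hw : (fun t => (E t * w t) ^ 2) = fun t =>
      (ε * v'' t + (1 - 2 * ε * θ) * v' t + (l + ε * θ ^ 2 - θ) * v t) ^ 2 := by
    funext t; rw [← hode]; ring
  rw [hw, integral_sq_damped_combination _ _ _ hv hv' h₀ h₁' h₂']
  exact sq_mul_le_damped_quadratic_form hε hκ ha hb (integral_nonneg fun _ => sq_nonneg _)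
    (integral_nonneg fun _ => sq_nonneg _) (integral_nonneg fun _ => sq_nonneg _)
    fun c => two_mul_integral_deriv_sq_le c hv hv' h₀ h₁' h₂'

theorem lp.hasSum_sq {ι : Type*} (f : lp (fun _ : ι => ℝ) 2) :
    HasSum (fun i => f i ^ 2) (‖f‖ ^ 2) := by
  simpa [real_inner_self_eq_norm_sq] using lp.hasSum_inner (𝕜 := ℝ) f f

section SquareIntegrableL2Valued

variable {α ι : Type*} [MeasurableSpace α] {μ : Measure α} {F G : α → lp (fun _ : ι => ℝ) 2}

theorem memLp_two_apply (hF : Integrable (fun x => ‖F x‖ ^ 2) μ) {i : ι}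
    (hm : AEStronglyMeasurable (fun x => F x i) μ) : MemLp (fun x => F x i) 2 μ :=
  (memLp_two_iff_integrable_sq hm).2 <| hF.mono' (hm.pow 2) <| ae_of_all _ fun x => by
    rw [norm_pow]
    exact pow_le_pow_left₀ (norm_nonneg _) (lp.norm_apply_le_norm two_ne_zero (F x) i) 2

theorem ofReal_integral_norm_sq_eq_tsum [Countable ι] (hF : Integrable (fun x => ‖F x‖ ^ 2) μ)
    (hm : ∀ i, AEStronglyMeasurable (fun x => F x i) μ) :
    ENNReal.ofReal (∫ x, ‖F x‖ ^ 2 ∂μ) = ∑' i, ENNReal.ofReal (∫ x, F x i ^ 2 ∂μ) := by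
  have hpt : ∀ x, ENNReal.ofReal (‖F x‖ ^ 2) = ∑' i, ENNReal.ofReal (F x i ^ 2) := fun x => by
    rw [← (lp.hasSum_sq (F x)).tsum_eq,
      ENNReal.ofReal_tsum_of_nonneg (fun _ => sq_nonneg _) (lp.hasSum_sq (F x)).summable]
  rw [ofReal_integral_eq_lintegral_ofReal hF (ae_of_all _ fun _ => sq_nonneg _)]
  simp_rw [hpt]
  rw [lintegral_tsum fun i => ((hm i).aemeasurable.pow_const 2).ennreal_ofReal]
  congr 1
  funext i
  rw [ofReal_integral_eq_lintegral_ofReal (memLp_two_apply hF (hm i)).integrable_sq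
    (ae_of_all _ fun _ => sq_nonneg _)]

theorem mul_integral_norm_sq_le_of_forall_apply [Countable ι] {K : ℝ} (hK : 0 ≤ K)
    (hF : Integrable (fun x => ‖F x‖ ^ 2) μ) (hG : Integrable (fun x => ‖G x‖ ^ 2) μ)
    (hmF : ∀ i, AEStronglyMeasurable (fun x => F x i) μ)
    (hmG : ∀ i, AEStronglyMeasurable (fun x => G x i) μ)
    (hle : ∀ i, K * ∫ x, F x i ^ 2 ∂μ ≤ ∫ x, G x i ^ 2 ∂μ) :
    K * ∫ x, ‖F x‖ ^ 2 ∂μ ≤ ∫ x, ‖G x‖ ^ 2 ∂μ := by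
  rw [← ENNReal.ofReal_le_ofReal_iff (integral_nonneg fun _ => sq_nonneg _),
    ENNReal.ofReal_mul hK, ofReal_integral_norm_sq_eq_tsum hF hmF,
    ofReal_integral_norm_sq_eq_tsum hG hmG, ← ENNReal.tsum_mul_left]
  refine ENNReal.tsum_le_tsum fun i => ?_
  rw [← ENNReal.ofReal_mul hK]
  exact ENNReal.ofReal_le_ofReal (hle i)

end SquareIntegrableL2Valued

theorem half_sub_le_abs_sub_midpoint {lam : ℕ → ℝ} (hmono : Monotone lam) (N n : ℕ) :
    (lam (N + 1) - lam N) / 2 ≤ |lam n - (lam N + lam (N + 1)) / 2| := by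
  rcases le_or_gt n N with hn | hn
  · exact le_abs.2 (Or.inr (by linarith [hmono hn]))
  · exact le_abs.2 (Or.inl (by linarith [hmono (Nat.succ_le_of_lt hn)]))

theorem norm_exp_mul_smul_sq {E : Type*} [NormedAddCommGroup E] [NormedSpace ℝ E]
    (θ t : ℝ) (x : E) : ‖Real.exp (θ * t) • x‖ ^ 2 = Real.exp (2 * θ * t) * ‖x‖ ^ 2 := by
  rw [norm_smul, mul_pow, Real.norm_of_nonneg (Real.exp_pos _).le, ← Real.exp_nat_mul]
  ring_nf

theorem stmt_5_general (lam : ℕ → ℝ) (hmono : Monotone lam)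
    (N : ℕ) (hgapN : lam N < lam (N + 1))
    (eps : ℝ) (heps : 0 < eps) (hgap : 1 / eps ≥ 3 * lam (N + 1) + lam N)
    (theta : ℝ) (htheta : 2 * theta * (eps * theta - 1) + lam N + lam (N + 1) = 0)
    (u h : ℝ → lp (fun _ : ℕ => ℝ) 2)
    (hu : Integrable (fun t => Real.exp (2 * theta * t) * ‖u t‖ ^ 2))
    (hh : Integrable (fun t => Real.exp (2 * theta * t) * ‖h t‖ ^ 2))
    (hureg : ∀ n : ℕ, ContDiff ℝ 2 (fun t => (u t : ℕ → ℝ) n))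
    (hu' : ∀ n : ℕ, Integrable (fun t =>
      (Real.exp (theta * t) * deriv (fun s => (u s : ℕ → ℝ) n) t) ^ 2))
    (hu'' : ∀ n : ℕ, Integrable (fun t =>
      (Real.exp (theta * t) * deriv (deriv (fun s => (u s : ℕ → ℝ) n)) t) ^ 2))
    (heq : ∀ n : ℕ, ∀ t : ℝ,
      eps * deriv (deriv (fun s => (u s : ℕ → ℝ) n)) t
        + deriv (fun s => (u s : ℕ → ℝ) n) t
        + lam n * (u t : ℕ → ℝ) n = (h t : ℕ → ℝ) n) :
    Real.sqrt (∫ t : ℝ, Real.exp (2 * theta * t) * ‖u t‖ ^ 2)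
      ≤ (2 / (lam (N + 1) - lam N)) *
        Real.sqrt (∫ t : ℝ, Real.exp (2 * theta * t) * ‖h t‖ ^ 2) := by
  set κ := (lam (N + 1) - lam N) / 2 with hκ_def
  have hκ : 0 < κ := by linarith
  have ha : ∀ n, κ ≤ |lam n + eps * theta ^ 2 - theta| := fun n => by
    rw [show lam n + eps * theta ^ 2 - theta = lam n - (lam N + lam (N + 1)) / 2 by
      linear_combination htheta / 2]
    exact half_sub_le_abs_sub_midpoint hmono N n
  have hb : 2 * eps * κ ≤ (1 - 2 * eps * theta) ^ 2 := by
    have h1 : (3 * lam (N + 1) + lam N) * eps ≤ 1 := (le_div_iff₀ heps).1 hgap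
    linear_combination h1 - 2 * eps * htheta
  have hcu' : ∀ n, Continuous (deriv fun t => (u t : ℕ → ℝ) n) := fun n =>
    (hureg n).continuous_deriv one_le_two
  have hcu'' : ∀ n, Continuous (deriv (deriv fun t => (u t : ℕ → ℝ) n)) := fun n =>
    (ContDiff.deriv' (n := 1) (hureg n)).continuous_deriv le_rfl
  have hch : ∀ n, Continuous fun t => (h t : ℕ → ℝ) n := fun n => by
    simp_rw [← heq n]
    have := (hureg n).continuous
    fun_prop
  have hmeas : ∀ {w : ℝ → ℝ}, Continuous w →
      AEStronglyMeasurable (fun t => Real.exp (theta * t) * w t) := fun hw =>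
    (by fun_prop : Continuous _).aestronglyMeasurable
  have hU : Integrable fun t => ‖Real.exp (theta * t) • u t‖ ^ 2 := by
    simpa only [norm_exp_mul_smul_sq] using hu
  have hH : Integrable fun t => ‖Real.exp (theta * t) • h t‖ ^ 2 := by
    simpa only [norm_exp_mul_smul_sq] using hh
  have hest := mul_integral_norm_sq_le_of_forall_apply (sq_nonneg κ) hU hH
    (fun n => hmeas (hureg n).continuous) (fun n => hmeas (hch n))
    fun n => weighted_damped_estimate heps hκ.le (ha n) hb (hureg n)
      (memLp_two_apply hU (hmeas (hureg n).continuous))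
      ((memLp_two_iff_integrable_sq (hmeas (hcu' n))).2 (hu' n))
      ((memLp_two_iff_integrable_sq (hmeas (hcu'' n))).2 (hu'' n)) (heq n)
  simp only [norm_exp_mul_smul_sq] at hest
  calc Real.sqrt (∫ t, Real.exp (2 * theta * t) * ‖u t‖ ^ 2)
      = κ⁻¹ * Real.sqrt (κ ^ 2 * ∫ t, Real.exp (2 * theta * t) * ‖u t‖ ^ 2) := by
        rw [Real.sqrt_mul (sq_nonneg _), Real.sqrt_sq hκ.le, inv_mul_cancel_left₀ hκ.ne']
    _ ≤ κ⁻¹ * Real.sqrt (∫ t, Real.exp (2 * theta * t) * ‖h t‖ ^ 2) := by gcongr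
    _ = _ := by rw [hκ_def, inv_div]

theorem stmt_5 (lam : ℕ → ℝ) (hmono : Monotone lam) (hpos : 0 < lam 0)
    (N : ℕ) (hgapN : lam N < lam (N + 1))
    (eps : ℝ) (heps : 0 < eps) (hgap : 1 / eps ≥ 3 * lam (N + 1) + lam N)
    (theta : ℝ) (htheta : 2 * theta * (eps * theta - 1) + lam N + lam (N + 1) = 0)
    (u h : ℝ → lp (fun _ : ℕ => ℝ) 2)
    (hu : Integrable (fun t => Real.exp (2 * theta * t) * ‖u t‖ ^ 2))
    (hh : Integrable (fun t => Real.exp (2 * theta * t) * ‖h t‖ ^ 2))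
    (hureg : ∀ n : ℕ, ContDiff ℝ 2 (fun t => (u t : ℕ → ℝ) n))
    (hu' : ∀ n : ℕ, Integrable (fun t =>
      (Real.exp (theta * t) * deriv (fun s => (u s : ℕ → ℝ) n) t) ^ 2))
    (hu'' : ∀ n : ℕ, Integrable (fun t =>
      (Real.exp (theta * t) * deriv (deriv (fun s => (u s : ℕ → ℝ) n)) t) ^ 2))
    (heq : ∀ n : ℕ, ∀ t : ℝ,
      eps * deriv (deriv (fun s => (u s : ℕ → ℝ) n)) t
        + deriv (fun s => (u s : ℕ → ℝ) n) t
        + lam n * (u t : ℕ → ℝ) n = (h t : ℕ → ℝ) n) :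
    Real.sqrt (∫ t : ℝ, Real.exp (2 * theta * t) * ‖u t‖ ^ 2)
      ≤ (2 / (lam (N + 1) - lam N)) *
        Real.sqrt (∫ t : ℝ, Real.exp (2 * theta * t) * ‖h t‖ ^ 2) :=
  stmt_5_general lam hmono N hgapN eps heps hgap theta htheta u h hu hh hureg hu' hu'' heq
end

section
/- Let 0 < λN < λN1 be real numbers, let ε > 0 satisfy ε·(3·λN1 + λN) ≤ 1, set θ_ε := (1 − √(1 − 2ε(λN + λN1)))/(2ε), and let λ ∈ ℝ satisfy λ ≥ λN1. If y : ℝ → ℝ is twice differentiable and satisfies ε·y″(t) + y′(t) + λ·y(t) = 0 for all t ≤ 0 and ∫_{−∞}^0 e^{2θ_ε t}·y(t)² dt < ∞, then y(t) = 0 for all t ≤ 0. -/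
/-!
Substituting `v = e^{θt} y` turns the equation into
`ε v'' + (1 - 2εθ) v' + (λ - (λN + λN1)/2) v = 0`, with positive damping
`1 - 2εθ = √(1 - 2ε(λN + λN1))` and positive stiffness, and turns the weighted hypothesis
into `v ∈ L²(-∞, 0]`. For `a v'' + b v' + c v = 0` with `a, b, c > 0`, the energy
`E = a v'² + c v²` and the form `R = (a v' + b v)² + a c v²` satisfy `E' = -2b v'²` and
`R' = -2bc v²`. Thus `R`, and with it `E`, stays bounded on `(-∞, 0]`, so `v' ∈ L²` as well.
Now `E` is integrable on `(-∞, 0]` and increases backwards in time, hence vanishes there.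
-/

open MeasureTheory Set Filter

theorem AntitoneOn.nonpos_of_integrableOn_Iic {f : ℝ → ℝ} {a : ℝ}
    (hf : AntitoneOn f (Iic a)) (hint : IntegrableOn f (Iic a)) {t : ℝ} (ht : t ≤ a) :
    f t ≤ 0 := by
  by_contra! hpos
  have hconst : IntegrableOn (fun _ => f t) (Iic t) := by
    refine Integrable.mono' (hint.mono_set (Iic_subset_Iic.2 ht)) aestronglyMeasurable_const ?_
    filter_upwards [ae_restrict_mem measurableSet_Iic] with s hs
    rw [Real.norm_of_nonneg hpos.le]
    exact hf (hs.trans ht) ht hs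
  simp [integrableOn_const_iff, hpos.ne'] at hconst

theorem sub_eq_mul_integral_of_hasDerivAt {F g : ℝ → ℝ} {k t : ℝ} (ht : t ≤ 0)
    (hF : ∀ s ≤ 0, HasDerivAt F (-k * g s) s) (hg : ContinuousOn g (Iic 0)) :
    F t - F 0 = k * ∫ s in t..0, g s := by
  have hFTC := intervalIntegral.integral_eq_sub_of_hasDerivAt
    (fun s hs => hF s (by rw [uIcc_of_le ht] at hs; exact hs.2))
    (((hg.mono Icc_subset_Iic_self).const_mul (-k)).intervalIntegrable_of_Icc ht)
  rw [intervalIntegral.integral_const_mul] at hFTC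
  linarith

theorem hasDerivAt_exp_mul_mul {f : ℝ → ℝ} {f' θ t : ℝ} (hf : HasDerivAt f f' t) :
    HasDerivAt (fun s => Real.exp (θ * s) * f s) (Real.exp (θ * t) * (f' + θ * f t)) t :=
  (((hasDerivAt_id t).const_mul θ).exp.mul hf).congr_deriv (by simp only [id]; ring)

namespace DampedOscillator

variable {a b c t : ℝ} {v v' v'' : ℝ → ℝ}

theorem hasDerivAt_energy (hv : HasDerivAt v (v' t) t) (hv' : HasDerivAt v' (v'' t) t)
    (hode : a * v'' t + b * v' t + c * v t = 0) :
    HasDerivAt (fun s => a * v' s ^ 2 + c * v s ^ 2) (-(2 * b) * v' t ^ 2) t := by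
  refine (((hv'.pow 2).const_mul a).add ((hv.pow 2).const_mul c)).congr_deriv ?_
  linear_combination 2 * v' t * hode

theorem hasDerivAt_lyapunov (hv : HasDerivAt v (v' t) t) (hv' : HasDerivAt v' (v'' t) t)
    (hode : a * v'' t + b * v' t + c * v t = 0) :
    HasDerivAt (fun s => (a * v' s + b * v s) ^ 2 + a * c * v s ^ 2)
      (-(2 * b * c) * v t ^ 2) t := by
  refine ((((hv'.const_mul a).add (hv.const_mul b)).pow 2).add
    ((hv.pow 2).const_mul (a * c))).congr_deriv ?_
  simp only [Pi.add_apply]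
  linear_combination 2 * (a * v' t + b * v t) * hode

theorem integrableOn_Iic_deriv_sq (ha : 0 < a) (hb : 0 < b) (hc : 0 < c)
    (hv : ∀ t ≤ 0, HasDerivAt v (v' t) t) (hv' : ∀ t ≤ 0, HasDerivAt v' (v'' t) t)
    (hode : ∀ t ≤ 0, a * v'' t + b * v' t + c * v t = 0)
    (hint : IntegrableOn (fun t => v t ^ 2) (Iic 0)) :
    IntegrableOn (fun t => v' t ^ 2) (Iic 0) := by
  set E := fun s => a * v' s ^ 2 + c * v s ^ 2
  set R := fun s => (a * v' s + b * v s) ^ 2 + a * c * v s ^ 2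
  have hvc : ContinuousOn v (Iic 0) := fun s hs => (hv s hs).continuousAt.continuousWithinAt
  have hv'c : ContinuousOn v' (Iic 0) := fun s hs => (hv' s hs).continuousAt.continuousWithinAt
  set M := R 0 + 2 * b * c * ∫ r in Iic 0, v r ^ 2
  have hR_le : ∀ s ≤ 0, R s ≤ M := by
    intro s hs
    have hR := sub_eq_mul_integral_of_hasDerivAt hs
      (fun r hr => hasDerivAt_lyapunov (hv r hr) (hv' r hr) (hode r hr)) (hvc.pow 2)
    have hmono : ∫ r in s..0, v r ^ 2 ≤ ∫ r in Iic 0, v r ^ 2 := by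
      rw [intervalIntegral.integral_of_le hs]
      exact setIntegral_mono_set hint (Eventually.of_forall fun r => sq_nonneg _)
        Ioc_subset_Iic_self.eventuallyLE
    simp only [R, M]
    nlinarith [mul_le_mul_of_nonneg_left hmono (by positivity : 0 ≤ 2 * b * c)]
  have hE_le : ∀ s, a * c * (a * E s) ≤ (2 * a * c + 2 * b ^ 2) * R s := fun s => by
    have hac : 0 ≤ a * c := by positivity
    simp only [E, R]
    nlinarith [mul_nonneg hac (sq_nonneg (a * v' s + 2 * b * v s)),
      mul_nonneg (sq_nonneg b) (sq_nonneg (a * v' s + b * v s)), mul_nonneg hac (sq_nonneg (v s))]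
  refine integrableOn_Iic_of_intervalIntegral_norm_bounded (l := atBot) (a := id)
    ((2 * a * c + 2 * b ^ 2) * M / (2 * b * (a * c * a))) 0
    (fun i => ((hv'c.pow 2).mono Icc_subset_Iic_self).integrableOn_Icc.mono_set
      Ioc_subset_Icc_self) tendsto_id ?_
  filter_upwards [eventually_le_atBot 0] with i hi
  simp only [id, norm_pow, Real.norm_eq_abs, sq_abs]
  have hE := sub_eq_mul_integral_of_hasDerivAt hi
    (fun s hs => hasDerivAt_energy (hv s hs) (hv' s hs) (hode s hs)) (hv'c.pow 2)
  have hE0 : 0 ≤ E 0 := by positivity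
  rw [le_div_iff₀ (by positivity)]
  calc (∫ s in i..0, v' s ^ 2) * (2 * b * (a * c * a)) = a * c * (a * (E i - E 0)) := by
        rw [hE]; ring
    _ ≤ a * c * (a * E i) := by gcongr; linarith
    _ ≤ (2 * a * c + 2 * b ^ 2) * R i := hE_le i
    _ ≤ (2 * a * c + 2 * b ^ 2) * M := by gcongr; exact hR_le i hi

theorem eq_zero_of_integrableOn_Iic_sq (ha : 0 < a) (hb : 0 < b) (hc : 0 < c)
    (hv : ∀ t ≤ 0, HasDerivAt v (v' t) t) (hv' : ∀ t ≤ 0, HasDerivAt v' (v'' t) t)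
    (hode : ∀ t ≤ 0, a * v'' t + b * v' t + c * v t = 0)
    (hint : IntegrableOn (fun t => v t ^ 2) (Iic 0)) (ht : t ≤ 0) : v t = 0 := by
  set E := fun s => a * v' s ^ 2 + c * v s ^ 2
  have hE' : ∀ s ≤ 0, HasDerivAt E (-(2 * b) * v' s ^ 2) s := fun s hs =>
    hasDerivAt_energy (hv s hs) (hv' s hs) (hode s hs)
  have hE_anti : AntitoneOn E (Iic 0) := by
    refine antitoneOn_of_hasDerivWithinAt_nonpos (convex_Iic 0)
      (fun s hs => (hE' s hs).continuousAt.continuousWithinAt)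
      (fun s hs => (hE' s (interior_subset (s := Iic 0) hs)).hasDerivWithinAt) fun s _ => ?_
    nlinarith [sq_nonneg (v' s)]
  have hE_int : IntegrableOn E (Iic 0) :=
    ((integrableOn_Iic_deriv_sq ha hb hc hv hv' hode hint).const_mul a).add (hint.const_mul c)
  have hE_nonpos := hE_anti.nonpos_of_integrableOn_Iic hE_int ht
  have hvt : v t ^ 2 ≤ 0 := by
    simp only [E] at hE_nonpos
    nlinarith [mul_nonneg ha.le (sq_nonneg (v' t))]
  exact pow_eq_zero_iff two_ne_zero |>.mp (le_antisymm hvt (sq_nonneg _))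

end DampedOscillator

theorem stmt_13_general (lamN lamN1 eps : ℝ) (hlt : lamN < lamN1)
    (heps : 0 < eps) (hgap : eps * (3 * lamN1 + lamN) ≤ 1)
    (theta : ℝ) (htheta : theta = (1 - Real.sqrt (1 - 2 * eps * (lamN + lamN1))) / (2 * eps))
    (lam : ℝ) (hlam : lam ≥ lamN1)
    (y : ℝ → ℝ) (hy : Differentiable ℝ y) (hy' : Differentiable ℝ (deriv y))
    (hode : ∀ t : ℝ, t ≤ 0 → eps * deriv (deriv y) t + deriv y t + lam * y t = 0)
    (hint : IntegrableOn (fun t => Real.exp (2 * theta * t) * (y t) ^ 2) (Set.Iic 0)) :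
    ∀ t : ℝ, t ≤ 0 → y t = 0 := by
  have hdisc : 0 < 1 - 2 * eps * (lamN + lamN1) := by nlinarith
  have hdamp : 1 - 2 * eps * theta = Real.sqrt (1 - 2 * eps * (lamN + lamN1)) := by
    rw [htheta]; field_simp; ring
  have hroot : 2 * theta * (eps * theta - 1) + lamN + lamN1 = 0 := by
    have hsq := congrArg (· ^ 2) hdamp
    simp only [Real.sq_sqrt hdisc.le] at hsq
    exact mul_left_cancel₀ (by positivity : 2 * eps ≠ 0) (by linear_combination hsq)
  intro t ht
  have hv := DampedOscillator.eq_zero_of_integrableOn_Iic_sq (t := t) (a := eps)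
    (b := 1 - 2 * eps * theta) (c := lam - (lamN + lamN1) / 2)
    (v := fun s => Real.exp (theta * s) * y s)
    (v' := fun s => Real.exp (theta * s) * (deriv y s + theta * y s))
    (v'' := fun s => Real.exp (theta * s) *
      (deriv (deriv y) s + theta * deriv y s + theta * (deriv y s + theta * y s)))
    heps (by rw [hdamp]; positivity) (by linarith)
    (fun s _ => hasDerivAt_exp_mul_mul (hy s).hasDerivAt)
    (fun s _ => hasDerivAt_exp_mul_mul ((hy' s).hasDerivAt.add ((hy s).hasDerivAt.const_mul theta)))
    (fun s hs => by linear_combination Real.exp (theta * s) * (hode s hs - y s / 2 * hroot))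
    (by convert hint using 2 with s; rw [mul_pow, ← Real.exp_nat_mul]; ring_nf) ht
  exact (mul_eq_zero.mp hv).resolve_left (Real.exp_ne_zero _)

theorem stmt_13 (lamN lamN1 eps : ℝ) (hlamN : 0 < lamN) (hlt : lamN < lamN1)
    (heps : 0 < eps) (hgap : eps * (3 * lamN1 + lamN) ≤ 1)
    (theta : ℝ) (htheta : theta = (1 - Real.sqrt (1 - 2 * eps * (lamN + lamN1))) / (2 * eps))
    (lam : ℝ) (hlam : lam ≥ lamN1)
    (y : ℝ → ℝ) (hy : Differentiable ℝ y) (hy' : Differentiable ℝ (deriv y))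
    (hode : ∀ t : ℝ, t ≤ 0 → eps * deriv (deriv y) t + deriv y t + lam * y t = 0)
    (hint : IntegrableOn (fun t => Real.exp (2 * theta * t) * (y t) ^ 2) (Set.Iic 0)) :
    ∀ t : ℝ, t ≤ 0 → y t = 0 :=
  stmt_13_general lamN lamN1 eps hlt heps hgap theta htheta lam hlam y hy hy' hode hint
end

section
/- Let 0 < λN < λN1 be real numbers, let ε > 0 satisfy ε·(3·λN1 + λN) ≤ 1, set θ_ε := (1 − √(1 − 2ε(λN + λN1)))/(2ε), and let λ ∈ ℝ satisfy 0 < λ ≤ λN (so that 4ελ < 1). Let y : ℝ → ℝ be twice differentiable with ε·y″(t) + y′(t) + λ·y(t) = 0 for all t ≤ 0. Then ∫_{−∞}^0 e^{2θ_ε t}·y(t)² dt < ∞ if and only if there exists p ∈ ℝ such that y(t) = p·e^{μ⁺t} for all t ≤ 0, where μ⁺ := (−1 + √(1−4ελ))/(2ε); in that case necessarily p = y(0). -/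
/-! On `t ≤ 0` the ODE factors as `(d/dt - μ⁺)(d/dt - μ⁻) y = 0`, so `y = A e^{μ⁺ t} + B e^{μ⁻ t}`
there, and `e^{θ t} y = A e^{(θ + μ⁺) t} + B e^{(θ + μ⁻) t}`. With `E = √(1 - 2ε(λN + λN1))` and
`D = √(1 - 4ελ)` we have `θ + μ⁺ = (D - E) / 2ε > 0`, because `2λ < λN + λN1`, and
`θ + μ⁻ = -(D + E) / 2ε ≤ 0`. So the first mode is square integrable on `(-∞, 0]`, the second is
at least `1` there, and `e^{θ t} y ∈ L²` forces `B = 0`. -/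

open MeasureTheory Real Set

lemma not_integrableOn_Iic_exp_mul {b : ℝ} (hb : b ≤ 0) :
    ¬ IntegrableOn (fun t => exp (b * t)) (Iic 0) := by
  intro h
  have h_one : IntegrableOn (fun _ : ℝ => (1 : ℝ)) (Iic 0) := by
    refine h.mono' aestronglyMeasurable_const ((ae_restrict_iff' measurableSet_Iic).2 ?_)
    filter_upwards with t (ht : t ≤ 0)
    rw [norm_one]
    exact one_le_exp (mul_nonneg_of_nonpos_of_nonpos hb ht)
  simp [integrableOn_const_iff, Real.volume_Iic] at h_one

lemma memLp_two_exp_mul_Iic_iff {c : ℝ} :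
    MemLp (fun t => exp (c * t)) 2 (volume.restrict (Iic 0)) ↔ 0 < c := by
  rw [memLp_two_iff_integrable_sq (by fun_prop)]
  have h_sq : (fun t => exp (c * t) ^ 2) = fun t => exp ((2 * c) * t) := by
    ext t
    rw [sq, ← exp_add]
    congr 1
    ring
  rw [h_sq]
  refine ⟨fun h => ?_, fun hc => integrableOn_exp_mul_Iic (by positivity) 0⟩
  by_contra hc
  exact not_integrableOn_Iic_exp_mul (by linarith) h

lemma integrableOn_Iic_sq_exp_add_exp_iff {a b : ℝ} (ha : 0 < a) (hb : b ≤ 0) (A B : ℝ) :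
    IntegrableOn (fun t => (A * exp (a * t) + B * exp (b * t)) ^ 2) (Iic 0) ↔ B = 0 := by
  rw [IntegrableOn, ← memLp_two_iff_integrable_sq (by fun_prop)]
  have h_a : MemLp (fun t => A * exp (a * t)) 2 (volume.restrict (Iic 0)) :=
    (memLp_two_exp_mul_Iic_iff.2 ha).const_mul A
  refine ⟨fun h => ?_, fun hB => by simpa [hB] using h_a⟩
  by_contra hB
  have h_b : MemLp (fun t => exp (b * t)) 2 (volume.restrict (Iic 0)) := by
    convert (h.sub h_a).const_mul B⁻¹ using 1
    ext t
    simp [hB]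
  exact hb.not_gt (memLp_two_exp_mul_Iic_iff.1 h_b)

lemma integrableOn_Iic_exp_mul_sq_iff {θ μ ν A B : ℝ} {y : ℝ → ℝ} (hμ : 0 < θ + μ)
    (hν : θ + ν ≤ 0) (hy : ∀ t ≤ 0, y t = A * exp (μ * t) + B * exp (ν * t)) :
    IntegrableOn (fun t => exp (2 * θ * t) * y t ^ 2) (Iic 0) ↔ B = 0 := by
  have h_eq : EqOn (fun t => exp (2 * θ * t) * y t ^ 2)
      (fun t => (A * exp ((θ + μ) * t) + B * exp ((θ + ν) * t)) ^ 2) (Iic 0) := by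
    intro t ht
    simp only [hy t ht, add_mul, exp_add, show 2 * θ * t = θ * t + θ * t by ring]
    ring
  rw [integrableOn_congr_fun h_eq measurableSet_Iic]
  exact integrableOn_Iic_sq_exp_add_exp_iff hμ hν A B

lemma eq_mul_exp_of_hasDerivAt_Iic {z : ℝ → ℝ} {μ : ℝ}
    (hz : ∀ t ≤ 0, HasDerivAt z (μ * z t) t) : ∀ t ≤ 0, z t = z 0 * exp (μ * t) := by
  set g : ℝ → ℝ := fun t => exp (-μ * t) * z t
  have hg : ∀ t ≤ 0, HasDerivAt g 0 t := by
    intro t ht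
    have h_exp : HasDerivAt (fun t => exp (-μ * t)) (exp (-μ * t) * -μ) t := by
      simpa using ((hasDerivAt_id t).const_mul (-μ)).exp
    exact (h_exp.mul (hz t ht)).congr_deriv (by ring)
  intro t ht
  have h_const := constant_of_has_deriv_right_zero (a := t) (b := 0)
    (fun x hx => (hg x hx.2).continuousAt.continuousWithinAt)
    (fun x hx => (hg x hx.2.le).hasDerivWithinAt) 0 ⟨ht, le_rfl⟩
  simp only [g, mul_zero, exp_zero, one_mul] at h_const
  rw [h_const, mul_right_comm, ← exp_add]
  simp

section SecondOrderODE

variable {ε lam μ ν : ℝ} {y : ℝ → ℝ}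

lemma deriv_sub_mul_eq_mul_exp (hε : ε ≠ 0) (hsum : ε * (μ + ν) = -1)
    (hprod : ε * (μ * ν) = lam) (hy : Differentiable ℝ y) (hy' : Differentiable ℝ (deriv y))
    (hode : ∀ t ≤ 0, ε * deriv (deriv y) t + deriv y t + lam * y t = 0) :
    ∀ t ≤ 0, deriv y t - ν * y t = (deriv y 0 - ν * y 0) * exp (μ * t) := by
  refine eq_mul_exp_of_hasDerivAt_Iic fun t ht => ?_
  refine ((hy' t).hasDerivAt.sub ((hy t).hasDerivAt.const_mul ν)).congr_deriv
    (mul_left_cancel₀ hε ?_)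
  linear_combination hode t ht - deriv y t * hsum + y t * hprod

lemma eq_add_exp_of_ode (hε : ε ≠ 0) (hμν : μ ≠ ν) (hsum : ε * (μ + ν) = -1)
    (hprod : ε * (μ * ν) = lam) (hy : Differentiable ℝ y) (hy' : Differentiable ℝ (deriv y))
    (hode : ∀ t ≤ 0, ε * deriv (deriv y) t + deriv y t + lam * y t = 0) :
    ∃ A B : ℝ, ∀ t ≤ 0, y t = A * exp (μ * t) + B * exp (ν * t) := by
  have h_μ := deriv_sub_mul_eq_mul_exp hε hsum hprod hy hy' hode
  have h_ν := deriv_sub_mul_eq_mul_exp (μ := ν) (ν := μ) hε (by linear_combination hsum)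
    (by linear_combination hprod) hy hy' hode
  have h_sub : μ - ν ≠ 0 := sub_ne_zero.2 hμν
  refine ⟨(deriv y 0 - ν * y 0) / (μ - ν), -(deriv y 0 - μ * y 0) / (μ - ν), fun t ht => ?_⟩
  field_simp
  linear_combination h_μ t ht - h_ν t ht

end SecondOrderODE

theorem stmt_14_general (lamN lamN1 eps : ℝ) (hlt : lamN < lamN1)
    (heps : 0 < eps) (hgap : eps * (3 * lamN1 + lamN) ≤ 1)
    (theta : ℝ) (htheta : theta = (1 - Real.sqrt (1 - 2 * eps * (lamN + lamN1))) / (2 * eps))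
    (lam : ℝ) (hlam : lam ≤ lamN)
    (y : ℝ → ℝ) (hy : Differentiable ℝ y) (hy' : Differentiable ℝ (deriv y))
    (hode : ∀ t : ℝ, t ≤ 0 → eps * deriv (deriv y) t + deriv y t + lam * y t = 0) :
    (IntegrableOn (fun t => Real.exp (2 * theta * t) * (y t) ^ 2) (Set.Iic 0) ↔
      ∃ p : ℝ, ∀ t : ℝ, t ≤ 0 →
        y t = p * Real.exp (((-1 + Real.sqrt (1 - 4 * eps * lam)) / (2 * eps)) * t))
    ∧ ∀ p : ℝ, (∀ t : ℝ, t ≤ 0 →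
        y t = p * Real.exp (((-1 + Real.sqrt (1 - 4 * eps * lam)) / (2 * eps)) * t)) →
        p = y 0 := by
  set E := √(1 - 2 * eps * (lamN + lamN1))
  set D := √(1 - 4 * eps * lam)
  have hED : E < D := sqrt_lt_sqrt (by nlinarith) (by nlinarith)
  have hE : 0 ≤ E := sqrt_nonneg _
  have hD : D ^ 2 = 1 - 4 * eps * lam := sq_sqrt (sqrt_pos.1 (hE.trans_lt hED)).le
  have hsum : eps * ((-1 + D) / (2 * eps) + (-1 - D) / (2 * eps)) = -1 := by
    field_simp; ring
  have hprod : eps * ((-1 + D) / (2 * eps) * ((-1 - D) / (2 * eps))) = lam := by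
    field_simp; linear_combination -hD
  have hθμ : 0 < theta + (-1 + D) / (2 * eps) := by
    rw [htheta, ← add_div]
    exact div_pos (by linarith) (by positivity)
  have hθν : theta + (-1 - D) / (2 * eps) ≤ 0 := by
    rw [htheta, ← add_div]
    exact div_nonpos_of_nonpos_of_nonneg (by linarith) (by positivity)
  have hμν : (-1 + D) / (2 * eps) ≠ (-1 - D) / (2 * eps) := by
    intro h
    field_simp at h
    linarith
  obtain ⟨A, B, hAB⟩ := eq_add_exp_of_ode heps.ne' hμν hsum hprod hy hy' hode
  refine ⟨⟨fun h => ⟨A, fun t ht => ?_⟩, fun ⟨p, hp⟩ => ?_⟩,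
    fun p hp => by simpa using (hp 0 le_rfl).symm⟩
  · rw [hAB t ht, (integrableOn_Iic_exp_mul_sq_iff hθμ hθν hAB).1 h]
    ring
  · exact (integrableOn_Iic_exp_mul_sq_iff (B := 0) hθμ hθν (by simpa using hp)).2 rfl

theorem stmt_14 (lamN lamN1 eps : ℝ) (hlamN : 0 < lamN) (hlt : lamN < lamN1)
    (heps : 0 < eps) (hgap : eps * (3 * lamN1 + lamN) ≤ 1)
    (theta : ℝ) (htheta : theta = (1 - Real.sqrt (1 - 2 * eps * (lamN + lamN1))) / (2 * eps))
    (lam : ℝ) (hlam0 : 0 < lam) (hlam : lam ≤ lamN)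
    (y : ℝ → ℝ) (hy : Differentiable ℝ y) (hy' : Differentiable ℝ (deriv y))
    (hode : ∀ t : ℝ, t ≤ 0 → eps * deriv (deriv y) t + deriv y t + lam * y t = 0) :
    (IntegrableOn (fun t => Real.exp (2 * theta * t) * (y t) ^ 2) (Set.Iic 0) ↔
      ∃ p : ℝ, ∀ t : ℝ, t ≤ 0 →
        y t = p * Real.exp (((-1 + Real.sqrt (1 - 4 * eps * lam)) / (2 * eps)) * t))
    ∧ ∀ p : ℝ, (∀ t : ℝ, t ≤ 0 →
        y t = p * Real.exp (((-1 + Real.sqrt (1 - 4 * eps * lam)) / (2 * eps)) * t)) →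
        p = y 0 :=
  stmt_14_general lamN lamN1 eps hlt heps hgap theta htheta lam hlam y hy hy' hode
end

section
/- Let m ∈ ℕ, ε > 0, L > 0, and let λ : Fin m → ℝ satisfy λ_i ≥ λ₁ > 0 for all i and some λ₁ > 0. Let F : (Fin m → ℝ) → (Fin m → ℝ) satisfy F(0) = 0 and ‖F(a) − F(b)‖ ≤ L·‖a − b‖ for the Euclidean norm. Let u : [0,∞) → (Fin m → ℝ) be such that each component u_i is twice continuously differentiable and ε·u_i″(t) + u_i′(t) + λ_i·u_i(t) = (F(u(t)))_i for all t ≥ 0 and all i. Then for all t ≥ 0: ε·‖u′(t)‖² + ∑_i λ_i·u_i(t)² + ∫_0^t ‖u′(s)‖² ds ≤ 2·e^{(L²/λ₁)·t}·(ε·‖u′(0)‖² + ∑_i λ_i·u_i(0)²). -/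
open MeasureTheory

theorem stmt_17 (m : ℕ) (eps L lam1 : ℝ) (heps : 0 < eps) (hL : 0 < L)
    (lam : Fin m → ℝ) (hlam1 : 0 < lam1) (hlam : ∀ i, lam1 ≤ lam i)
    (F : (Fin m → ℝ) → (Fin m → ℝ)) (hF0 : F 0 = 0)
    (hF : ∀ a b : Fin m → ℝ,
      Real.sqrt (∑ i, (F a i - F b i) ^ 2) ≤ L * Real.sqrt (∑ i, (a i - b i) ^ 2))
    (u : ℝ → Fin m → ℝ)
    (hreg : ∀ i, ContDiff ℝ 2 (fun t => u t i))
    (heq : ∀ i, ∀ t : ℝ, 0 ≤ t →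
      eps * deriv (deriv (fun s => u s i)) t + deriv (fun s => u s i) t
        + lam i * u t i = F (u t) i) :
    ∀ t : ℝ, 0 ≤ t →
      eps * (∑ i, (deriv (fun s => u s i) t) ^ 2) + (∑ i, lam i * (u t i) ^ 2)
        + ∫ s in (0:ℝ)..t, ∑ i, (deriv (fun r => u r i) s) ^ 2
      ≤ 2 * Real.exp ((L ^ 2 / lam1) * t) *
          (eps * (∑ i, (deriv (fun s => u s i) 0) ^ 2) + ∑ i, lam i * (u 0 i) ^ 2) := by
  -- notations
  set v : Fin m → ℝ → ℝ := fun i => deriv (fun s => u s i) with hv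
  set w : Fin m → ℝ → ℝ := fun i => deriv (v i) with hw
  -- regularity facts
  have hdu : ∀ i, Differentiable ℝ (fun s => u s i) := fun i =>
    (hreg i).differentiable two_ne_zero
  have hv1 : ∀ i, ContDiff ℝ 1 (v i) := by
    intro i
    have h2 : ContDiff ℝ (1 + 1) (fun s => u s i) := by norm_num; exact hreg i
    rw [contDiff_succ_iff_deriv] at h2
    exact h2.2.2
  have hdv : ∀ i, Differentiable ℝ (v i) := fun i => (hv1 i).differentiable one_ne_zero
  have hcu : ∀ i, Continuous (fun s => u s i) := fun i => (hdu i).continuous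
  have hcv : ∀ i, Continuous (v i) := fun i => (hdv i).continuous
  -- energy and dissipation
  set V : ℝ → ℝ := fun s => ∑ i, (v i s) ^ 2 with hV
  set E : ℝ → ℝ := fun s => eps * (∑ i, (v i s) ^ 2) + ∑ i, lam i * (u s i) ^ 2 with hE
  set G : ℝ → ℝ := fun s => E s + ∫ r in (0:ℝ)..s, V r with hG
  have hVcont : Continuous V := continuous_finset_sum _ fun i _ => (hcv i).pow 2
  have hVnonneg : ∀ s, 0 ≤ V s := fun s =>
    Finset.sum_nonneg fun i _ => sq_nonneg _
  have hInonneg : ∀ s : ℝ, 0 ≤ s → 0 ≤ ∫ r in (0:ℝ)..s, V r := fun s hs =>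
    intervalIntegral.integral_nonneg hs fun r _ => hVnonneg r
  have hEnonneg : ∀ s, 0 ≤ E s := fun s =>
    add_nonneg (mul_nonneg heps.le (Finset.sum_nonneg fun i _ => sq_nonneg _))
      (Finset.sum_nonneg fun i _ =>
        mul_nonneg ((hlam1.trans_le (hlam i)).le) (sq_nonneg _))
  -- derivative of G
  have hGderiv : ∀ s : ℝ, HasDerivAt G
      ((eps * (∑ i, 2 * v i s * w i s) + ∑ i, lam i * (2 * u s i * v i s)) + V s) s := by
    intro s
    have hE' : HasDerivAt E
        (eps * (∑ i, 2 * v i s * w i s) + ∑ i, lam i * (2 * u s i * v i s)) s := by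
      have h1 : HasDerivAt (fun r => ∑ i, (v i r) ^ 2) (∑ i, 2 * v i s * w i s) s := by
        refine HasDerivAt.fun_sum fun i _ => ?_
        have := ((hdv i s).hasDerivAt).fun_pow 2
        simpa [mul_comm, mul_assoc, mul_left_comm] using this
      have h2 : HasDerivAt (fun r => ∑ i, lam i * (u r i) ^ 2)
          (∑ i, lam i * (2 * u s i * v i s)) s := by
        refine HasDerivAt.fun_sum fun i _ => ?_
        have := (((hdu i s).hasDerivAt).pow 2).const_mul (lam i)
        simpa [mul_comm, mul_assoc, mul_left_comm] using this
      exact (h1.const_mul eps).add h2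
    have hI' : HasDerivAt (fun r => ∫ x in (0:ℝ)..r, V x) (V s) s :=
      (hVcont.integral_hasStrictDerivAt 0 s).hasDerivAt
    exact hE'.add hI'
  -- the key differential inequality
  set K : ℝ := L ^ 2 / lam1 with hK
  have hbound : ∀ s : ℝ, 0 ≤ s →
      (eps * (∑ i, 2 * v i s * w i s) + ∑ i, lam i * (2 * u s i * v i s)) + V s
        ≤ K * G s := by
    intro s hs
    have hsum : eps * (∑ i, 2 * v i s * w i s)
        = ∑ i, 2 * v i s * (F (u s) i - v i s - lam i * u s i) := by
      rw [Finset.mul_sum]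
      refine Finset.sum_congr rfl fun i _ => ?_
      have := heq i s hs
      have : eps * w i s = F (u s) i - v i s - lam i * u s i := by
        simp only [hw, hv]; linarith [heq i s hs]
      calc eps * (2 * v i s * w i s) = 2 * v i s * (eps * w i s) := by ring
        _ = 2 * v i s * (F (u s) i - v i s - lam i * u s i) := by rw [this]
    rw [hsum]
    have hexpand : (∑ i, 2 * v i s * (F (u s) i - v i s - lam i * u s i))
        + ∑ i, lam i * (2 * u s i * v i s) + V s
        = ∑ i, (2 * v i s * F (u s) i - v i s ^ 2) := by
      simp only [hV]
      rw [← Finset.sum_add_distrib, ← Finset.sum_add_distrib]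
      exact Finset.sum_congr rfl fun i _ => by ring
    rw [hexpand]
    have h1 : ∑ i, (2 * v i s * F (u s) i - v i s ^ 2) ≤ ∑ i, (F (u s) i) ^ 2 := by
      rw [← sub_nonneg, ← Finset.sum_sub_distrib]
      refine Finset.sum_nonneg fun i _ => ?_
      have := sq_nonneg (F (u s) i - v i s)
      nlinarith
    have h2 : ∑ i, (F (u s) i) ^ 2 ≤ L ^ 2 * ∑ i, (u s i) ^ 2 := by
      have := hF (u s) 0
      simp only [hF0, Pi.zero_apply, sub_zero] at this
      have hnn : (0:ℝ) ≤ ∑ i, (F (u s) i) ^ 2 := Finset.sum_nonneg fun i _ => sq_nonneg _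
      have hnn2 : (0:ℝ) ≤ ∑ i, (u s i) ^ 2 := Finset.sum_nonneg fun i _ => sq_nonneg _
      calc ∑ i, (F (u s) i) ^ 2 = (Real.sqrt (∑ i, (F (u s) i) ^ 2)) ^ 2 := by
            rw [Real.sq_sqrt hnn]
        _ ≤ (L * Real.sqrt (∑ i, (u s i) ^ 2)) ^ 2 := by
            apply pow_le_pow_left₀ (Real.sqrt_nonneg _) this
        _ = L ^ 2 * ∑ i, (u s i) ^ 2 := by
            rw [mul_pow, Real.sq_sqrt hnn2]
    have h3 : L ^ 2 * ∑ i, (u s i) ^ 2 ≤ K * ∑ i, lam i * (u s i) ^ 2 := by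
      have hterm : lam1 * ∑ i, (u s i) ^ 2 ≤ ∑ i, lam i * (u s i) ^ 2 := by
        rw [Finset.mul_sum]
        exact Finset.sum_le_sum fun i _ => mul_le_mul_of_nonneg_right (hlam i) (sq_nonneg _)
      have : K * (lam1 * ∑ i, (u s i) ^ 2) ≤ K * ∑ i, lam i * (u s i) ^ 2 :=
        mul_le_mul_of_nonneg_left hterm
          (div_nonneg (sq_nonneg L) hlam1.le)
      calc L ^ 2 * ∑ i, (u s i) ^ 2 = K * (lam1 * ∑ i, (u s i) ^ 2) := by
            rw [hK]; field_simp
        _ ≤ K * ∑ i, lam i * (u s i) ^ 2 := this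
    have h4 : K * ∑ i, lam i * (u s i) ^ 2 ≤ K * G s := by
      apply mul_le_mul_of_nonneg_left _ (div_nonneg (sq_nonneg L) hlam1.le)
      have : ∑ i, lam i * (u s i) ^ 2 ≤ E s := by
        simp only [hE]
        nlinarith [mul_nonneg heps.le (hVnonneg s)]
      have := this.trans (le_add_of_nonneg_right (hInonneg s hs))
      simpa [hG] using this
    linarith
  -- Gronwall
  intro t ht
  have hGcont : Continuous G := continuous_iff_continuousAt.2 fun x => (hGderiv x).continuousAt
  have key := le_gronwallBound_of_liminf_deriv_right_le (f := G)
    (f' := fun s => (eps * (∑ i, 2 * v i s * w i s) + ∑ i, lam i * (2 * u s i * v i s)) + V s)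
    (δ := E 0) (K := K) (ε := 0) (a := 0) (b := t)
    hGcont.continuousOn
    (fun x _ r hr => by
      simpa [slope_def_field, div_eq_inv_mul] using
        ((hGderiv x).hasDerivWithinAt (s := Set.Ici x)).liminf_right_slope_le hr)
    (by simp [hG, intervalIntegral.integral_same])
    (fun x hx => by simpa using hbound x hx.1)
  have hGt := key t (Set.right_mem_Icc.2 ht)
  rw [sub_zero, gronwallBound_ε0] at hGt
  have hfinal : G t ≤ 2 * Real.exp (K * t) * E 0 := by
    nlinarith [Real.exp_pos (K * t), hEnonneg 0]
  simpa [hG, hE, hV, hv, hK] using hfinal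
end

section
/- Let 0 < λN < λN1 be real numbers. Set α := √((λN1 − λN)/(3·λN1 + λN)). Then there exists a constant C > 0, depending only on λN and λN1, such that for every ε > 0 with ε·(3·λN1 + λN) ≤ 1, with θ := (1 − √(1 − 2ε(λN + λN1)))/(2ε), for every λ > 0 and every twice continuously differentiable v : (−∞,0] → ℝ satisfying: v and v′ belong to L²((−∞,0]); ε·v′(t)² + λ·v(t)² → 0 as t → −∞; and the function g(t) := ε·v″(t) + (1 − 2εθ)·v′(t) + (λ − (λN + λN1)/2)·v(t) belongs to L²((−∞,0]); the following holds for all t ≤ 0: ε·v′(t)² + λ·v(t)² + α·∫_{−∞}^t v′(s)² ds ≤ C·∫_{−∞}^0 ( g(s)² + v(s)² ) ds. -/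
open MeasureTheory Filter

set_option maxHeartbeats 1000000 in
theorem stmt_19 (lamN lamN1 : ℝ) (hlamN : 0 < lamN) (hlt : lamN < lamN1) :
    ∃ C : ℝ, 0 < C ∧
      ∀ eps : ℝ, 0 < eps → eps * (3 * lamN1 + lamN) ≤ 1 →
        ∀ theta : ℝ,
          theta = (1 - Real.sqrt (1 - 2 * eps * (lamN + lamN1))) / (2 * eps) →
          ∀ lam : ℝ, 0 < lam →
            ∀ v g : ℝ → ℝ, ContDiff ℝ 2 v →
              (∀ t : ℝ, g t = eps * deriv (deriv v) t + (1 - 2 * eps * theta) * deriv v t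
                + (lam - (lamN + lamN1) / 2) * v t) →
              IntegrableOn (fun t => (v t) ^ 2) (Set.Iic 0) →
              IntegrableOn (fun t => (deriv v t) ^ 2) (Set.Iic 0) →
              Tendsto (fun t => eps * (deriv v t) ^ 2 + lam * (v t) ^ 2) atBot (nhds 0) →
              IntegrableOn (fun t => (g t) ^ 2) (Set.Iic 0) →
              ∀ t : ℝ, t ≤ 0 →
                eps * (deriv v t) ^ 2 + lam * (v t) ^ 2
                  + Real.sqrt ((lamN1 - lamN) / (3 * lamN1 + lamN)) *
                      ∫ s in Set.Iic t, (deriv v s) ^ 2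
                ≤ C * ∫ s in Set.Iic (0:ℝ), ((g s) ^ 2 + (v s) ^ 2) := by
  set m : ℝ := (lamN + lamN1) / 2 with hm_def
  have hm : 0 < m := by rw [hm_def]; linarith
  set D : ℝ := 3 * lamN1 + lamN with hD_def
  have hD : 0 < D := by rw [hD_def]; linarith
  have hfrac_pos : 0 < (lamN1 - lamN) / D := div_pos (by linarith) hD
  set a : ℝ := Real.sqrt ((lamN1 - lamN) / D) with ha_def
  have hapos : 0 < a := Real.sqrt_pos.mpr hfrac_pos
  refine ⟨(2 + 4 * m ^ 2) / a, div_pos (by positivity) hapos, ?_⟩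
  intro eps heps hepsle theta htheta lam hlam v g hv hg hintv hintdv htend hintg t ht
  -- beta
  have hs_pos : 0 < lamN + lamN1 := by linarith
  have hfrac_le : (lamN1 - lamN) / D ≤ 1 - 2 * eps * (lamN + lamN1) := by
    rw [div_le_iff₀ hD]
    have h1 : 0 ≤ (lamN + lamN1) * (1 - eps * D) :=
      mul_nonneg hs_pos.le (by linarith)
    nlinarith [h1, hD_def]
  have h1snn : 0 ≤ 1 - 2 * eps * (lamN + lamN1) := le_trans hfrac_pos.le hfrac_le
  set b : ℝ := Real.sqrt (1 - 2 * eps * (lamN + lamN1)) with hb_def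
  have hab : a ≤ b := Real.sqrt_le_sqrt hfrac_le
  have hbpos : 0 < b := lt_of_lt_of_le hapos hab
  have hbne : b ≠ 0 := hbpos.ne'
  have hane : a ≠ 0 := hapos.ne'
  have hmne : m ≠ 0 := hm.ne'
  have hbeq : 1 - 2 * eps * theta = b := by
    rw [htheta]; field_simp; ring
  clear_value m D a b
  -- regularity
  have h2' : ContDiff ℝ (1 + 1 : WithTop ℕ∞) v := by norm_num; exact hv
  have hv1 : Differentiable ℝ v := (contDiff_succ_iff_deriv.mp h2').1
  have hdv1 : ContDiff ℝ 1 (deriv v) := (contDiff_succ_iff_deriv.mp h2').2.2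
  have hv2 : Differentiable ℝ (deriv v) := (contDiff_one_iff_deriv.mp hdv1).1
  have hcddv : Continuous (deriv (deriv v)) := (contDiff_one_iff_deriv.mp hdv1).2
  have hcdv : Continuous (deriv v) := hv2.continuous
  have hcv : Continuous v := hv1.continuous
  have hcg : Continuous g := by
    have hgeq : g = fun s => eps * deriv (deriv v) s + (1 - 2 * eps * theta) * deriv v s
        + (lam - m) * v s := funext hg
    rw [hgeq]
    continuity
  -- the energy function
  set F : ℝ → ℝ := fun x => eps / 2 * (deriv v x) ^ 2 + (lam - m) / 2 * (v x) ^ 2 with hF_def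
  have hF' : ∀ x : ℝ, HasDerivAt F (g x * deriv v x - b * (deriv v x) ^ 2) x := by
    intro x
    have h1 : HasDerivAt (fun y => (deriv v y) ^ 2) (2 * deriv v x * deriv (deriv v) x) x := by
      simpa [mul_comm] using ((hv2 x).hasDerivAt).fun_pow 2
    have h2 : HasDerivAt (fun y => (v y) ^ 2) (2 * v x * deriv v x) x := by
      simpa [mul_comm] using ((hv1 x).hasDerivAt).fun_pow 2
    have h3 := (h1.const_mul (eps / 2)).add (h2.const_mul ((lam - m) / 2))
    have h4 : g x * deriv v x - b * (deriv v x) ^ 2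
        = eps / 2 * (2 * deriv v x * deriv (deriv v) x) + (lam - m) / 2 * (2 * v x * deriv v x) := by
      have hgx := hg x
      rw [hbeq] at hgx
      rw [hgx]; ring
    rw [hF_def, h4]
    exact h3
  -- limits at -infty
  have htv2' : Tendsto (fun s => lam * (v s) ^ 2) atBot (nhds 0) := by
    refine tendsto_of_tendsto_of_tendsto_of_le_of_le tendsto_const_nhds htend
      (fun s => by positivity) (fun s => by nlinarith [sq_nonneg (deriv v s)])
  have htv2 : Tendsto (fun s => (v s) ^ 2) atBot (nhds 0) := by
    have h1 := htv2'.const_mul lam⁻¹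
    have h2 : (fun s => (v s) ^ 2) = fun s => lam⁻¹ * (lam * (v s) ^ 2) := by
      funext s; field_simp
    rw [h2]; simpa using h1
  have htdv2' : Tendsto (fun s => eps * (deriv v s) ^ 2) atBot (nhds 0) := by
    refine tendsto_of_tendsto_of_tendsto_of_le_of_le tendsto_const_nhds htend
      (fun s => by positivity) (fun s => by nlinarith [sq_nonneg (v s)])
  have htdv2 : Tendsto (fun s => (deriv v s) ^ 2) atBot (nhds 0) := by
    have h1 := htdv2'.const_mul eps⁻¹
    have h2 : (fun s => (deriv v s) ^ 2) = fun s => eps⁻¹ * (eps * (deriv v s) ^ 2) := by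
      funext s; field_simp
    rw [h2]; simpa using h1
  have hFto : Tendsto F atBot (nhds 0) := by
    rw [hF_def]
    have := (htdv2.const_mul (eps / 2)).add (htv2.const_mul ((lam - m) / 2))
    simpa using this
  clear_value F
  -- integrability
  have hsub : Set.Iic t ⊆ Set.Iic (0:ℝ) := Set.Iic_subset_Iic.mpr ht
  have hintdv_t : IntegrableOn (fun s => (deriv v s) ^ 2) (Set.Iic t) := hintdv.mono_set hsub
  have hintg_t : IntegrableOn (fun s => (g s) ^ 2) (Set.Iic t) := hintg.mono_set hsub
  have hintv_t : IntegrableOn (fun s => (v s) ^ 2) (Set.Iic t) := hintv.mono_set hsub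
  have hint_gdv : IntegrableOn (fun s => g s * deriv v s) (Set.Iic t) := by
    refine Integrable.mono' ((hintg_t.add hintdv_t).const_mul (1/2))
      ((hcg.mul hcdv).aestronglyMeasurable) (ae_of_all _ fun s => ?_)
    simp only [Pi.add_apply]
    rw [Real.norm_eq_abs, abs_mul]
    nlinarith [sq_abs (g s), sq_abs (deriv v s), sq_nonneg (|g s| - |deriv v s|)]
  have hint_vdv : IntegrableOn (fun s => 2 * v s * deriv v s) (Set.Iic t) := by
    refine Integrable.mono' (hintv_t.add hintdv_t)
      (((continuous_const.mul hcv).mul hcdv).aestronglyMeasurable) (ae_of_all _ fun s => ?_)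
    simp only [Pi.add_apply]
    rw [Real.norm_eq_abs, abs_mul, abs_mul, abs_two]
    nlinarith [sq_abs (v s), sq_abs (deriv v s), sq_nonneg (|v s| - |deriv v s|)]
  -- FTC
  have hint_F' : IntegrableOn (fun s => g s * deriv v s - b * (deriv v s) ^ 2) (Set.Iic t) :=
    hint_gdv.sub (hintdv_t.const_mul b)
  have hFTC : ∫ s in Set.Iic t, (g s * deriv v s - b * (deriv v s) ^ 2) = F t - 0 :=
    integral_Iic_of_hasDerivAt_of_tendsto' (fun x _ => hF' x) hint_F' hFto
  have hVTC : ∫ s in Set.Iic t, 2 * v s * deriv v s = (v t) ^ 2 - 0 :=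
    integral_Iic_of_hasDerivAt_of_tendsto' (f := fun y => (v y) ^ 2)
      (fun x _ => by simpa [mul_comm] using ((hv1 x).hasDerivAt).fun_pow 2) hint_vdv htv2
  -- nonnegativity and monotonicity of the integrals
  have hAnn : 0 ≤ ∫ s in Set.Iic t, (g s) ^ 2 :=
    setIntegral_nonneg measurableSet_Iic fun x _ => sq_nonneg _
  have hBnn : 0 ≤ ∫ s in Set.Iic t, (deriv v s) ^ 2 :=
    setIntegral_nonneg measurableSet_Iic fun x _ => sq_nonneg _
  have hA0nn : 0 ≤ ∫ s in Set.Iic (0:ℝ), (g s) ^ 2 :=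
    setIntegral_nonneg measurableSet_Iic fun x _ => sq_nonneg _
  have hV0nn : 0 ≤ ∫ s in Set.Iic (0:ℝ), (v s) ^ 2 :=
    setIntegral_nonneg measurableSet_Iic fun x _ => sq_nonneg _
  have hAle : (∫ s in Set.Iic t, (g s) ^ 2) ≤ ∫ s in Set.Iic (0:ℝ), (g s) ^ 2 :=
    setIntegral_mono_set hintg (ae_of_all _ fun x => sq_nonneg _)
      (HasSubset.Subset.eventuallyLE hsub)
  have hVle : (∫ s in Set.Iic t, (v s) ^ 2) ≤ ∫ s in Set.Iic (0:ℝ), (v s) ^ 2 :=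
    setIntegral_mono_set hintv (ae_of_all _ fun x => sq_nonneg _)
      (HasSubset.Subset.eventuallyLE hsub)
  -- integral inequality for g * v'
  have hGdv_le : (∫ s in Set.Iic t, g s * deriv v s)
      ≤ (1/(2*b)) * (∫ s in Set.Iic t, (g s) ^ 2)
        + (b/2) * ∫ s in Set.Iic t, (deriv v s) ^ 2 := by
    have hi1 : IntegrableOn (fun s => (1/(2*b)) * (g s) ^ 2) (Set.Iic t) := hintg_t.const_mul _
    have hi2 : IntegrableOn (fun s => (b/2) * (deriv v s) ^ 2) (Set.Iic t) := hintdv_t.const_mul _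
    have hpt : ∀ s, g s * deriv v s ≤ (1/(2*b)) * (g s) ^ 2 + (b/2) * (deriv v s) ^ 2 := by
      intro s
      have hkey : (2*b) * ((1/(2*b)) * (g s) ^ 2 + (b/2) * (deriv v s) ^ 2 - g s * deriv v s)
          = (g s - b * deriv v s) ^ 2 := by
        field_simp; ring
      nlinarith [hkey, sq_nonneg (g s - b * deriv v s), hbpos]
    have hi12 : IntegrableOn (fun s => (1/(2*b)) * (g s) ^ 2 + (b/2) * (deriv v s) ^ 2)
        (Set.Iic t) := hi1.add hi2
    have hstep : (∫ s in Set.Iic t, g s * deriv v s)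
        ≤ ∫ s in Set.Iic t, ((1/(2*b)) * (g s) ^ 2 + (b/2) * (deriv v s) ^ 2) :=
      integral_mono hint_gdv hi12 hpt
    have heq : (∫ s in Set.Iic t, ((1/(2*b)) * (g s) ^ 2 + (b/2) * (deriv v s) ^ 2))
        = (1/(2*b)) * (∫ s in Set.Iic t, (g s) ^ 2)
          + (b/2) * ∫ s in Set.Iic t, (deriv v s) ^ 2 := by
      rw [integral_add hi1 hi2, integral_const_mul, integral_const_mul]
    linarith [hstep, heq.le, heq.ge]
  have h5 : F t + (b/2) * (∫ s in Set.Iic t, (deriv v s) ^ 2)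
      ≤ (1/(2*a)) * ∫ s in Set.Iic (0:ℝ), (g s) ^ 2 := by
    have hsp : ∫ s in Set.Iic t, (g s * deriv v s - b * (deriv v s) ^ 2)
        = (∫ s in Set.Iic t, g s * deriv v s)
          - b * ∫ s in Set.Iic t, (deriv v s) ^ 2 := by
      rw [integral_sub hint_gdv (hintdv_t.const_mul b), integral_const_mul]
    rw [hsp] at hFTC
    have h1 : (1/(2*b)) * (∫ s in Set.Iic t, (g s) ^ 2)
        ≤ (1/(2*a)) * ∫ s in Set.Iic (0:ℝ), (g s) ^ 2 := by
      have h2 : (1/(2*b)) ≤ (1/(2*a)) :=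
        one_div_le_one_div_of_le (by linarith) (by linarith)
      have h3 := mul_le_mul_of_nonneg_right h2 hAnn
      have h4 := mul_le_mul_of_nonneg_left hAle (le_of_lt (one_div_pos.mpr (by linarith : (0:ℝ) < 2*a)))
      linarith
    linarith [hGdv_le, hFTC, h1]
  -- pointwise bound for v(t)^2
  have h6 : (v t) ^ 2 ≤ (2*m/a) * (∫ s in Set.Iic (0:ℝ), (v s) ^ 2)
      + (a/(2*m)) * ∫ s in Set.Iic t, (deriv v s) ^ 2 := by
    have hi1 : IntegrableOn (fun s => (2*m/a) * (v s) ^ 2) (Set.Iic t) := hintv_t.const_mul _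
    have hi2 : IntegrableOn (fun s => (a/(2*m)) * (deriv v s) ^ 2) (Set.Iic t) :=
      hintdv_t.const_mul _
    have hpt : ∀ s, 2 * v s * deriv v s ≤ (2*m/a) * (v s) ^ 2 + (a/(2*m)) * (deriv v s) ^ 2 := by
      intro s
      have hkey : (2*m/a) * ((2*m/a) * (v s) ^ 2 + (a/(2*m)) * (deriv v s) ^ 2
          - 2 * v s * deriv v s) = ((2*m/a) * v s - deriv v s) ^ 2 := by
        field_simp; ring
      have hcpos : 0 < 2*m/a := div_pos (by linarith) hapos
      nlinarith [hkey, sq_nonneg ((2*m/a) * v s - deriv v s), hcpos]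
    have h1 : (v t) ^ 2 = ∫ s in Set.Iic t, 2 * v s * deriv v s := by rw [hVTC, sub_zero]
    have h2 : (∫ s in Set.Iic t, 2 * v s * deriv v s)
        ≤ (2*m/a) * (∫ s in Set.Iic t, (v s) ^ 2)
          + (a/(2*m)) * ∫ s in Set.Iic t, (deriv v s) ^ 2 := by
      have hi12 : IntegrableOn (fun s => (2*m/a) * (v s) ^ 2 + (a/(2*m)) * (deriv v s) ^ 2)
          (Set.Iic t) := hi1.add hi2
      have hstep : (∫ s in Set.Iic t, 2 * v s * deriv v s)
          ≤ ∫ s in Set.Iic t, ((2*m/a) * (v s) ^ 2 + (a/(2*m)) * (deriv v s) ^ 2) :=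
        integral_mono hint_vdv hi12 hpt
      have heq : (∫ s in Set.Iic t, ((2*m/a) * (v s) ^ 2 + (a/(2*m)) * (deriv v s) ^ 2))
          = (2*m/a) * (∫ s in Set.Iic t, (v s) ^ 2)
            + (a/(2*m)) * ∫ s in Set.Iic t, (deriv v s) ^ 2 := by
        rw [integral_add hi1 hi2, integral_const_mul, integral_const_mul]
      linarith [hstep, heq.le, heq.ge]
    have h3 : (2*m/a) * (∫ s in Set.Iic t, (v s) ^ 2)
        ≤ (2*m/a) * ∫ s in Set.Iic (0:ℝ), (v s) ^ 2 :=
      mul_le_mul_of_nonneg_left hVle (le_of_lt (div_pos (by linarith) hapos))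
    linarith
  have h7 : -(m/2) * (v t) ^ 2 ≤ F t := by
    rw [hF_def]
    nlinarith [sq_nonneg (deriv v t), sq_nonneg (v t), mul_nonneg hlam.le (sq_nonneg (v t)),
      mul_nonneg heps.le (sq_nonneg (deriv v t))]
  have h6' : m * (v t) ^ 2 ≤ 2 * (m^2/a) * (∫ s in Set.Iic (0:ℝ), (v s) ^ 2)
      + (a/2) * ∫ s in Set.Iic t, (deriv v s) ^ 2 := by
    have h := mul_le_mul_of_nonneg_left h6 hm.le
    have hid : m * ((2*m/a) * (∫ s in Set.Iic (0:ℝ), (v s) ^ 2)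
        + (a/(2*m)) * ∫ s in Set.Iic t, (deriv v s) ^ 2)
        = 2 * (m^2/a) * (∫ s in Set.Iic (0:ℝ), (v s) ^ 2)
          + (a/2) * ∫ s in Set.Iic t, (deriv v s) ^ 2 := by
      field_simp
    linarith [h, hid.le, hid.ge]
  have habB : a * (∫ s in Set.Iic t, (deriv v s) ^ 2)
      ≤ b * ∫ s in Set.Iic t, (deriv v s) ^ 2 := mul_le_mul_of_nonneg_right hab hBnn
  have hB1 : (a/4) * (∫ s in Set.Iic t, (deriv v s) ^ 2)
      ≤ (1/(2*a)) * (∫ s in Set.Iic (0:ℝ), (g s) ^ 2)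
        + (m^2/a) * ∫ s in Set.Iic (0:ℝ), (v s) ^ 2 := by
    linarith [h5, h7, h6', habB]
  -- conclusion
  have hgoal_int : ∫ s in Set.Iic (0:ℝ), ((g s) ^ 2 + (v s) ^ 2)
      = (∫ s in Set.Iic (0:ℝ), (g s) ^ 2) + ∫ s in Set.Iic (0:ℝ), (v s) ^ 2 :=
    integral_add hintg hintv
  have hELHS : eps * (deriv v t) ^ 2 + lam * (v t) ^ 2 = 2 * F t + m * (v t) ^ 2 := by
    rw [hF_def]; ring
  rw [hgoal_int, hELHS]
  have hC : (2 + 4 * m ^ 2) / a * ((∫ s in Set.Iic (0:ℝ), (g s) ^ 2)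
        + ∫ s in Set.Iic (0:ℝ), (v s) ^ 2)
      = 4 * ((1/(2*a)) * ∫ s in Set.Iic (0:ℝ), (g s) ^ 2)
        + 4 * ((m^2/a) * ∫ s in Set.Iic (0:ℝ), (g s) ^ 2)
        + 4 * ((1/(2*a)) * ∫ s in Set.Iic (0:ℝ), (v s) ^ 2)
        + 4 * ((m^2/a) * ∫ s in Set.Iic (0:ℝ), (v s) ^ 2) := by
    field_simp; ring
  rw [hC]
  have hx1 : 0 ≤ (m^2/a) * ∫ s in Set.Iic (0:ℝ), (g s) ^ 2 :=
    mul_nonneg (div_nonneg (sq_nonneg m) hapos.le) hA0nn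
  have hx2 : 0 ≤ (1/(2*a)) * ∫ s in Set.Iic (0:ℝ), (v s) ^ 2 :=
    mul_nonneg (le_of_lt (one_div_pos.mpr (by linarith))) hV0nn
  linarith [h5, habB, h6', hB1, hx1, hx2]
end
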